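/- arXiv:1401.0748 — 7 statements merged into one kernel-verified Lean document; each statement's English description precedes it below -/
import Mathlib

section
/- Let A ⊆ B(H) be a unital operator algebra and F a uniform algebra. Then every unital bounded algebra homomorphism φ: A → F is completely contractive, i.e. ‖(φ(a_ij))‖ ≤ ‖(a_ij)‖ for every d ∈ ℕ and every d×d matrix (a_ij) with entries in A. -/
/-!
Evaluating `φ` at a point `x` of `X` gives a bounded character `χₓ` of `A`, and a bounded
character is contractive: `|χₓ a|ⁿ = |χₓ (aⁿ)| ≤ C ‖a‖ⁿ` for all `n`. For unit vectors `ξ, η ∈ ℂᵈ`,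
the number `⟨ξ, [χₓ (aᵢⱼ)] η⟩` is `χₓ` of the compression `b = ∑ conj ξᵢ ηⱼ aᵢⱼ`, and
`‖b‖ ≤ ‖(aᵢⱼ)‖` because `⟨w, b v⟩ = ⟨ξ ⊗ w, (aᵢⱼ) (η ⊗ v)⟩` in `H^d`. Taking the supremum over
`ξ, η` and then over `x` bounds the norm of `(φ (aᵢⱼ))`.
-/

/-- The norm of a `d × d` matrix of bounded operators on `H`, viewed as an operator
on the `ℓ²`-direct sum `H^d` (the C*-norm on `M_d(B(H))`). -/
noncomputable def matOpNorm {H : Type*} [NormedAddCommGroup H] [NormedSpace ℂ H]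
    {d : ℕ} (M : Matrix (Fin d) (Fin d) (H →L[ℂ] H)) : ℝ :=
  ‖((PiLp.continuousLinearEquiv 2 ℂ (fun _ : Fin d => H)).symm.toContinuousLinearMap.comp
      ((ContinuousLinearMap.pi fun i => ∑ j, (M i j).comp (ContinuousLinearMap.proj j)).comp
        (PiLp.continuousLinearEquiv 2 ℂ (fun _ : Fin d => H)).toContinuousLinearMap))‖

/-- `cod` is completely bounded relative to the matrix norms induced by `dom`. -/
def CompletelyBounded {ι H₂ H₃ : Type*}
    [NormedAddCommGroup H₂] [NormedSpace ℂ H₂] [NormedAddCommGroup H₃] [NormedSpace ℂ H₃]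
    (dom : ι → (H₂ →L[ℂ] H₂)) (cod : ι → (H₃ →L[ℂ] H₃)) : Prop :=
  ∃ C : ℝ, ∀ (d : ℕ) (M : Matrix (Fin d) (Fin d) ι),
    matOpNorm (fun i j => cod (M i j)) ≤ C * matOpNorm (fun i j => dom (M i j))

/-- The completely bounded norm of the map `dom i ↦ cod i`. -/
noncomputable def cbNormRel {ι H₂ H₃ : Type*}
    [NormedAddCommGroup H₂] [NormedSpace ℂ H₂] [NormedAddCommGroup H₃] [NormedSpace ℂ H₃]
    (dom : ι → (H₂ →L[ℂ] H₂)) (cod : ι → (H₃ →L[ℂ] H₃)) : ℝ :=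
  sSup { r : ℝ | ∃ (d : ℕ) (M : Matrix (Fin d) (Fin d) ι),
    matOpNorm (fun i j => dom (M i j)) ≤ 1 ∧ r = matOpNorm (fun i j => cod (M i j)) }

/-- The C*-norm of a matrix over `C(X, ℂ)`. -/
noncomputable def cMatNorm {X : Type*} [TopologicalSpace X] {d : ℕ}
    (M : Matrix (Fin d) (Fin d) C(X, ℂ)) : ℝ :=
  ⨆ x : X, ‖Matrix.toEuclideanCLM (𝕜 := ℂ) (Matrix.of fun i j => M i j x)‖

open Filter ComplexConjugate
open scoped InnerProductSpace

lemma le_of_eventually_pow_le_mul_pow {a b C : ℝ} (ha : 0 ≤ a) (hb : 0 ≤ b)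
    (h : ∀ᶠ n : ℕ in atTop, a ^ n ≤ C * b ^ n) : a ≤ b := by
  by_contra! hba
  have ha₀ : 0 < a := hb.trans_lt hba
  have hr : Tendsto (fun n : ℕ => C * (b / a) ^ n) atTop (nhds (C * 0)) :=
    (tendsto_pow_atTop_nhds_zero_of_lt_one (div_nonneg hb ha) ((div_lt_one ha₀).2 hba)).const_mul C
  obtain ⟨n, hn, hsmall⟩ := (h.and (hr.eventually (gt_mem_nhds (show C * 0 < 1 by simp)))).exists
  have hpow : C * b ^ n = C * (b / a) ^ n * a ^ n := by
    rw [mul_assoc, ← mul_pow, div_mul_cancel₀ b ha₀.ne']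
  nlinarith [pow_pos ha₀ n]

lemma MonoidHom.norm_apply_le_of_bound {R 𝕜 : Type*} [SeminormedRing R] [NormedDivisionRing 𝕜]
    (f : R →* 𝕜) {C : ℝ} (hf : ∀ a, ‖f a‖ ≤ C * ‖a‖) (a : R) : ‖f a‖ ≤ ‖a‖ := by
  have hC : 0 ≤ C := by
    have h1 := hf 1
    rw [map_one, norm_one] at h1
    exact (pos_of_mul_pos_left (one_pos.trans_le h1) (norm_nonneg _)).le
  refine le_of_eventually_pow_le_mul_pow (C := C) (norm_nonneg _) (norm_nonneg _) ?_
  filter_upwards [eventually_ge_atTop 1] with n hn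
  calc ‖f a‖ ^ n = ‖f (a ^ n)‖ := by rw [map_pow, norm_pow]
    _ ≤ C * ‖a ^ n‖ := hf _
    _ ≤ C * ‖a‖ ^ n := mul_le_mul_of_nonneg_left (norm_pow_le' a hn) hC

lemma ContinuousLinearMap.opNorm_le_of_norm_inner_le {𝕜 E F : Type*} [RCLike 𝕜]
    [NormedAddCommGroup E] [InnerProductSpace 𝕜 E] [NormedAddCommGroup F] [InnerProductSpace 𝕜 F]
    {T : E →L[𝕜] F} {C : ℝ} (hC : 0 ≤ C) (h : ∀ x y, ‖inner 𝕜 x (T y)‖ ≤ C * ‖x‖ * ‖y‖) :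
    ‖T‖ ≤ C :=
  opNorm_le_of_re_inner_le hC fun x y hx hy =>
    calc RCLike.re (inner 𝕜 (T x) y) ≤ ‖inner 𝕜 (T x) y‖ := RCLike.re_le_norm _
      _ = ‖inner 𝕜 y (T x)‖ := norm_inner_symm _ _
      _ ≤ C := by simpa [hx, hy] using h y x

section MatrixOperator

variable {H : Type*} [NormedAddCommGroup H] {d : ℕ}

noncomputable def matOp [NormedSpace ℂ H] (M : Matrix (Fin d) (Fin d) (H →L[ℂ] H)) :
    PiLp 2 (fun _ : Fin d => H) →L[ℂ] PiLp 2 (fun _ : Fin d => H) :=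
  (PiLp.continuousLinearEquiv 2 ℂ (fun _ : Fin d => H)).symm.toContinuousLinearMap.comp
    ((ContinuousLinearMap.pi fun i => ∑ j, (M i j).comp (ContinuousLinearMap.proj j)).comp
      (PiLp.continuousLinearEquiv 2 ℂ (fun _ : Fin d => H)).toContinuousLinearMap)

lemma matOpNorm_eq_norm_matOp [NormedSpace ℂ H] (M : Matrix (Fin d) (Fin d) (H →L[ℂ] H)) :
    matOpNorm M = ‖matOp M‖ := rfl

lemma matOpNorm_nonneg [NormedSpace ℂ H] (M : Matrix (Fin d) (Fin d) (H →L[ℂ] H)) :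
    0 ≤ matOpNorm M :=
  norm_nonneg _

lemma matOp_apply [NormedSpace ℂ H] (M : Matrix (Fin d) (Fin d) (H →L[ℂ] H))
    (v : PiLp 2 (fun _ : Fin d => H)) (i : Fin d) :
    matOp M v i = ∑ j, M i j (v j) := by
  simp [matOp]

variable [InnerProductSpace ℂ H]

/-- The vector `ξ ⊗ w` of `ℂᵈ ⊗ H = H^d`. -/
noncomputable def tensorVec (ξ : EuclideanSpace ℂ (Fin d)) (w : H) : PiLp 2 (fun _ : Fin d => H) :=
  WithLp.toLp 2 fun i => ξ i • w

lemma norm_tensorVec (ξ : EuclideanSpace ℂ (Fin d)) (w : H) :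
    ‖tensorVec ξ w‖ = ‖ξ‖ * ‖w‖ := by
  refine (sq_eq_sq₀ (norm_nonneg _) (by positivity)).1 ?_
  rw [PiLp.norm_sq_eq_of_L2, mul_pow, EuclideanSpace.norm_sq_eq, Finset.sum_mul]
  simp [tensorVec, norm_smul, mul_pow]

lemma inner_compression_eq_inner_matOp (M : Matrix (Fin d) (Fin d) (H →L[ℂ] H))
    (ξ η : EuclideanSpace ℂ (Fin d)) (w v : H) :
    ⟪w, (∑ i, ∑ j, (conj (ξ i) * η j) • M i j) v⟫_ℂ =
      ⟪tensorVec ξ w, matOp M (tensorVec η v)⟫_ℂ := by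
  simp only [PiLp.inner_apply, matOp_apply, tensorVec, sum_apply, smul_apply, map_smul,
    inner_sum, inner_smul_left, inner_smul_right]
  refine Finset.sum_congr rfl fun i _ => Finset.sum_congr rfl fun j _ => ?_
  ring

lemma norm_compression_le (M : Matrix (Fin d) (Fin d) (H →L[ℂ] H))
    (ξ η : EuclideanSpace ℂ (Fin d)) :
    ‖∑ i, ∑ j, (conj (ξ i) * η j) • M i j‖ ≤ matOpNorm M * ‖ξ‖ * ‖η‖ := by
  rw [matOpNorm_eq_norm_matOp]
  refine ContinuousLinearMap.opNorm_le_of_norm_inner_le (by positivity) fun w v => ?_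
  rw [inner_compression_eq_inner_matOp]
  calc ‖⟪tensorVec ξ w, matOp M (tensorVec η v)⟫_ℂ‖
      ≤ ‖tensorVec ξ w‖ * (‖matOp M‖ * ‖tensorVec η v‖) :=
        (norm_inner_le_norm _ _).trans (by gcongr; exact (matOp M).le_opNorm _)
    _ = ‖matOp M‖ * ‖ξ‖ * ‖η‖ * ‖w‖ * ‖v‖ := by
        rw [norm_tensorVec, norm_tensorVec]; ring

end MatrixOperator

lemma inner_toEuclideanCLM_eq_sum {d : ℕ} (N : Matrix (Fin d) (Fin d) ℂ)
    (ξ η : EuclideanSpace ℂ (Fin d)) :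
    ⟪ξ, Matrix.toEuclideanCLM (𝕜 := ℂ) N η⟫_ℂ = ∑ i, ∑ j, conj (ξ i) * η j * N i j := by
  simp only [PiLp.inner_apply, RCLike.inner_apply, Matrix.ofLp_toEuclideanCLM, Matrix.mulVec,
    dotProduct, Finset.sum_mul]
  refine Finset.sum_congr rfl fun i _ => Finset.sum_congr rfl fun j _ => ?_
  ring

lemma norm_toEuclideanCLM_le_of_compression {d : ℕ} (N : Matrix (Fin d) (Fin d) ℂ) {K : ℝ}
    (hK : 0 ≤ K)
    (h : ∀ ξ η : EuclideanSpace ℂ (Fin d), ‖∑ i, ∑ j, conj (ξ i) * η j * N i j‖ ≤ K * ‖ξ‖ * ‖η‖) :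
    ‖Matrix.toEuclideanCLM (𝕜 := ℂ) N‖ ≤ K :=
  ContinuousLinearMap.opNorm_le_of_norm_inner_le hK fun ξ η => by
    rw [inner_toEuclideanCLM_eq_sum]; exact h ξ η

theorem stmt3_general
    {H : Type*} [NormedAddCommGroup H] [InnerProductSpace ℂ H]
    {X : Type*} [TopologicalSpace X] [CompactSpace X]
    (A : Subalgebra ℂ (H →L[ℂ] H))
    (F : Subalgebra ℂ C(X, ℂ))
    (φ : A →ₐ[ℂ] F)
    (hb : ∃ C : ℝ, ∀ a : A, ‖(φ a : C(X, ℂ))‖ ≤ C * ‖(a : H →L[ℂ] H)‖) :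
    ∀ (d : ℕ) (M : Matrix (Fin d) (Fin d) A),
      cMatNorm (fun i j => (φ (M i j) : C(X, ℂ))) ≤
        matOpNorm (fun i j => (M i j : H →L[ℂ] H)) := by
  obtain ⟨C, hC⟩ := hb
  intro d M
  refine Real.iSup_le (fun x => ?_) (matOpNorm_nonneg _)
  let χ : A →ₐ[ℂ] ℂ := (ContinuousMap.evalAlgHom ℂ ℂ x).comp (F.val.comp φ)
  have hχ : ∀ a : A, ‖χ a‖ ≤ ‖a‖ := (χ : A →* ℂ).norm_apply_le_of_bound fun a =>
    (ContinuousMap.norm_coe_le_norm (φ a : C(X, ℂ)) x).trans (hC a)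
  refine norm_toEuclideanCLM_le_of_compression _ (matOpNorm_nonneg _) fun ξ η => ?_
  have hχ_compression : χ (∑ i, ∑ j, (conj (ξ i) * η j) • M i j) =
      ∑ i, ∑ j, conj (ξ i) * η j * Matrix.of (fun i j => (φ (M i j) : C(X, ℂ)) x) i j := by
    simp only [map_sum, AlgHom.map_smul_of_tower, smul_eq_mul]
    rfl
  have hcoe : ((∑ i, ∑ j, (conj (ξ i) * η j) • M i j : A) : H →L[ℂ] H) =
      ∑ i, ∑ j, (conj (ξ i) * η j) • (M i j : H →L[ℂ] H) := by
    simp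
  calc _ = ‖χ (∑ i, ∑ j, (conj (ξ i) * η j) • M i j)‖ := by rw [hχ_compression]
    _ ≤ ‖((∑ i, ∑ j, (conj (ξ i) * η j) • M i j : A) : H →L[ℂ] H)‖ := hχ _
    _ ≤ _ := hcoe ▸ norm_compression_le _ ξ η

/-- **Lemma 2.3 (i)**: every unital bounded algebra homomorphism from a unital operator
algebra `A ⊆ B(H)` into a uniform algebra `F ⊆ C(X)` is completely contractive. -/
theorem stmt3
    {H : Type*} [NormedAddCommGroup H] [InnerProductSpace ℂ H] [CompleteSpace H]
    {X : Type*} [TopologicalSpace X] [CompactSpace X] [T2Space X]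
    (A : Subalgebra ℂ (H →L[ℂ] H))
    (F : Subalgebra ℂ C(X, ℂ)) (hF : IsClosed (F : Set C(X, ℂ)))
    (φ : A →ₐ[ℂ] F)
    (hb : ∃ C : ℝ, ∀ a : A, ‖(φ a : C(X, ℂ))‖ ≤ C * ‖(a : H →L[ℂ] H)‖) :
    ∀ (d : ℕ) (M : Matrix (Fin d) (Fin d) A),
      cMatNorm (fun i j => (φ (M i j) : C(X, ℂ))) ≤
        matOpNorm (fun i j => (M i j : H →L[ℂ] H)) :=
  stmt3_general A F φ hb
end

section
/- Let α, β, γ, α', β', γ', δ' be complex numbers such that ‖[[αz₁, βz₁+γz₂],[0,0]]‖ = ‖[[α'z₁, β'z₁+γ'z₂],[0, δ'z₂]]‖ for every z₁, z₂ ∈ ℂ. Then |γ|² = |γ'|² + |δ'|², |α|² + |β|² = |α'|² + |β'|², and |β||γ| ≤ |β'||γ'|; moreover, if |β||γ| = |β'||γ'| then α'δ' = 0. -/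
/-!
For a 2×2 matrix `M`, `‖M‖²` is the larger eigenvalue of `Mᴴ M`, hence the larger root of
`λ² - ‖M‖_F² λ + |det M|² = 0`. In particular a singular matrix has operator norm equal to its
Frobenius norm, which gives the two identities at `(z₁, z₂) = (0, 1)` and `(1, 0)`. At `z₁ = 1`,
`z₂ = w` with `|w| = 1` the quadratic relation for the right-hand matrix, combined with these two
identities, reads `f(w) · 2 Re((β' conj γ' - β conj γ) conj w) = |α' δ'|²`, where
`f(w) = |α|² + |β|² + |γ|² + 2 Re(β conj γ conj w)`; comparing `w` with `-w` forces either
`α = β = γ = 0`, or `β' conj γ' = β conj γ` and `α' δ' = 0`.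
-/

/-- The operator norm of a 2×2 complex matrix acting on `ℂ²` with the Euclidean norm. -/
noncomputable def opNorm2 (M : Matrix (Fin 2) (Fin 2) ℂ) : ℝ :=
  ‖Matrix.toEuclideanCLM (𝕜 := ℂ) M‖

open ComplexConjugate

theorem ContinuousLinearMap.sq_opNorm_eq_of_le_of_eq {𝕜 E F : Type*} [NontriviallyNormedField 𝕜]
    [NormedAddCommGroup E] [NormedSpace 𝕜 E] [SeminormedAddCommGroup F] [NormedSpace 𝕜 F]
    (f : E →L[𝕜] F) {c : ℝ} (hle : ∀ x, ‖f x‖ ^ 2 ≤ c * ‖x‖ ^ 2) {x₀ : E} (hx₀ : x₀ ≠ 0)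
    (heq : ‖f x₀‖ ^ 2 = c * ‖x₀‖ ^ 2) : ‖f‖ ^ 2 = c := by
  have hx₀ : 0 < ‖x₀‖ ^ 2 := by positivity
  have hc : 0 ≤ c := nonneg_of_mul_nonneg_left (heq ▸ sq_nonneg _) hx₀
  refine le_antisymm ?_ ?_
  · refine (Real.le_sqrt (norm_nonneg _) hc).mp <|
      f.opNorm_le_bound (Real.sqrt_nonneg c) fun x => ?_
    rw [← Real.sqrt_sq (norm_nonneg x), ← Real.sqrt_mul hc, ← Real.sqrt_sq (norm_nonneg (f x))]
    exact Real.sqrt_le_sqrt (hle x)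
  · refine le_of_mul_le_mul_right ?_ hx₀
    rw [← heq, ← mul_pow]
    exact pow_le_pow_left₀ (norm_nonneg _) (f.le_opNorm x₀) 2

/-- The Hermitian form of `[[p, q], [conj q, r]]`. -/
noncomputable def hermForm₂ (p r : ℝ) (q x y : ℂ) : ℝ :=
  p * ‖x‖ ^ 2 + 2 * (conj x * q * y).re + r * ‖y‖ ^ 2

section hermForm₂

variable {p r μ : ℝ} {q : ℂ}

theorem hermForm₂_le (hp : p ≤ μ) (hr : r ≤ μ) (hq : (μ - p) * (μ - r) = ‖q‖ ^ 2) (x y : ℂ) :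
    hermForm₂ p r q x y ≤ μ * (‖x‖ ^ 2 + ‖y‖ ^ 2) := by
  rcases hp.eq_or_lt with rfl | hp
  · obtain rfl : q = 0 := by simpa using hq.symm
    simp only [hermForm₂, mul_zero, zero_mul, Complex.zero_re, add_zero]
    nlinarith [sq_nonneg ‖y‖]
  · have key : (μ - p) * (μ * (‖x‖ ^ 2 + ‖y‖ ^ 2) - hermForm₂ p r q x y) =
        ‖((μ - p : ℝ) : ℂ) * x - q * y‖ ^ 2 := by
      simp only [hermForm₂, Complex.sq_norm, Complex.normSq_apply] at hq ⊢
      simp only [Complex.mul_re, Complex.mul_im, Complex.sub_re, Complex.sub_im, Complex.conj_re,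
        Complex.conj_im, Complex.ofReal_re, Complex.ofReal_im]
      linear_combination (y.re * y.re + y.im * y.im) * hq
    have := (mul_nonneg_iff_of_pos_left (sub_pos.mpr hp)).mp (key ▸ sq_nonneg _)
    linarith

theorem exists_hermForm₂_eq (hq : (μ - p) * (μ - r) = ‖q‖ ^ 2) :
    ∃ x y : ℂ, (x, y) ≠ 0 ∧ hermForm₂ p r q x y = μ * (‖x‖ ^ 2 + ‖y‖ ^ 2) := by
  by_cases h : q = 0 ∧ μ = p
  · obtain ⟨rfl, rfl⟩ := h
    exact ⟨1, 0, by simp, by simp [hermForm₂]⟩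
  · refine ⟨q, ((μ - p : ℝ) : ℂ), fun h0 => h ?_, ?_⟩
    · simp only [Prod.mk_eq_zero, Complex.ofReal_eq_zero, sub_eq_zero] at h0
      exact h0
    · simp only [hermForm₂, Complex.sq_norm, Complex.normSq_apply] at hq ⊢
      simp only [Complex.mul_re, Complex.mul_im, Complex.conj_re,
        Complex.conj_im, Complex.ofReal_re, Complex.ofReal_im]
      linear_combination (p - μ) * hq

end hermForm₂

theorem sq_norm_toEuclideanCLM_fin_two (a b c d : ℂ) (x : EuclideanSpace ℂ (Fin 2)) :
    ‖Matrix.toEuclideanCLM (𝕜 := ℂ) !![a, b; c, d] x‖ ^ 2 =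
      hermForm₂ (‖a‖ ^ 2 + ‖c‖ ^ 2) (‖b‖ ^ 2 + ‖d‖ ^ 2) (conj a * b + conj c * d) (x 0) (x 1) := by
  simp only [EuclideanSpace.norm_sq_eq, Fin.sum_univ_two, hermForm₂, Complex.sq_norm,
    Complex.normSq_apply, Matrix.ofLp_toEuclideanCLM, Matrix.mulVec, dotProduct, Matrix.of_apply,
    Matrix.cons_val', Matrix.cons_val_fin_one, Matrix.cons_val_zero, Matrix.cons_val_one,
    Complex.add_re, Complex.mul_re, Complex.add_im, Complex.mul_im, Complex.conj_re,
    Complex.conj_im]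
  ring

theorem sq_norm_euclideanSpace_fin_two (x : EuclideanSpace ℂ (Fin 2)) :
    ‖x‖ ^ 2 = ‖x 0‖ ^ 2 + ‖x 1‖ ^ 2 := by
  simp [EuclideanSpace.norm_sq_eq, Fin.sum_univ_two]

theorem opNorm2_fin_two_sq (a b c d : ℂ) :
    opNorm2 !![a, b; c, d] ^ 2 = (‖a‖ ^ 2 + ‖c‖ ^ 2 + (‖b‖ ^ 2 + ‖d‖ ^ 2) +
      √((‖a‖ ^ 2 + ‖c‖ ^ 2 - (‖b‖ ^ 2 + ‖d‖ ^ 2)) ^ 2 +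
        4 * ‖conj a * b + conj c * d‖ ^ 2)) / 2 := by
  set p := ‖a‖ ^ 2 + ‖c‖ ^ 2
  set r := ‖b‖ ^ 2 + ‖d‖ ^ 2
  set q := conj a * b + conj c * d
  set s := √((p - r) ^ 2 + 4 * ‖q‖ ^ 2)
  have hs : s ^ 2 = (p - r) ^ 2 + 4 * ‖q‖ ^ 2 := Real.sq_sqrt (by positivity)
  have hprs : |p - r| ≤ s := Real.abs_le_sqrt (by nlinarith [sq_nonneg ‖q‖])
  have hp : p ≤ (p + r + s) / 2 := by linarith [le_abs_self (p - r)]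
  have hr : r ≤ (p + r + s) / 2 := by linarith [neg_abs_le (p - r)]
  have hq : ((p + r + s) / 2 - p) * ((p + r + s) / 2 - r) = ‖q‖ ^ 2 := by linear_combination hs / 4
  obtain ⟨x, y, hxy, heq⟩ := exists_hermForm₂_eq hq
  refine (Matrix.toEuclideanCLM (𝕜 := ℂ) !![a, b; c, d]).sq_opNorm_eq_of_le_of_eq
    (x₀ := !₂[x, y]) (fun v => ?_) ?_ ?_
  · rw [sq_norm_toEuclideanCLM_fin_two, sq_norm_euclideanSpace_fin_two]
    exact hermForm₂_le hp hr hq _ _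
  · simpa using hxy
  · rw [sq_norm_toEuclideanCLM_fin_two, sq_norm_euclideanSpace_fin_two]
    exact heq

theorem Complex.sq_norm_mul_sub_mul (a b c d : ℂ) :
    ‖a * d - b * c‖ ^ 2 =
      (‖a‖ ^ 2 + ‖c‖ ^ 2) * (‖b‖ ^ 2 + ‖d‖ ^ 2) - ‖conj a * b + conj c * d‖ ^ 2 := by
  simp only [Complex.sq_norm, Complex.normSq_apply, Complex.mul_re, Complex.mul_im,
    Complex.add_re, Complex.add_im, Complex.sub_re, Complex.sub_im, Complex.conj_re,
    Complex.conj_im]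
  ring

theorem opNorm2_fin_two_sq_mul_sub (a b c d : ℂ) :
    opNorm2 !![a, b; c, d] ^ 2 *
        (‖a‖ ^ 2 + ‖b‖ ^ 2 + ‖c‖ ^ 2 + ‖d‖ ^ 2 - opNorm2 !![a, b; c, d] ^ 2) =
      ‖a * d - b * c‖ ^ 2 := by
  rw [opNorm2_fin_two_sq, Complex.sq_norm_mul_sub_mul]
  have := Real.sq_sqrt (x := ((‖a‖ ^ 2 + ‖c‖ ^ 2) - (‖b‖ ^ 2 + ‖d‖ ^ 2)) ^ 2 +
    4 * ‖conj a * b + conj c * d‖ ^ 2) (by positivity)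
  linear_combination (-1 / 4 : ℝ) * this

theorem sum_sq_norm_le_two_mul_opNorm2_sq (a b c d : ℂ) :
    ‖a‖ ^ 2 + ‖b‖ ^ 2 + ‖c‖ ^ 2 + ‖d‖ ^ 2 ≤ 2 * opNorm2 !![a, b; c, d] ^ 2 := by
  rw [opNorm2_fin_two_sq]
  linarith [Real.sqrt_nonneg (((‖a‖ ^ 2 + ‖c‖ ^ 2) - (‖b‖ ^ 2 + ‖d‖ ^ 2)) ^ 2 +
    4 * ‖conj a * b + conj c * d‖ ^ 2)]

theorem opNorm2_fin_two_sq_of_mul_eq_mul {a b c d : ℂ} (h : a * d = b * c) :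
    opNorm2 !![a, b; c, d] ^ 2 = ‖a‖ ^ 2 + ‖b‖ ^ 2 + ‖c‖ ^ 2 + ‖d‖ ^ 2 := by
  have hmul := opNorm2_fin_two_sq_mul_sub a b c d
  have hle := sum_sq_norm_le_two_mul_opNorm2_sq a b c d
  rw [h, sub_self, norm_zero, zero_pow two_ne_zero] at hmul
  rcases mul_eq_zero.mp hmul with h0 | h0
  · linarith [sq_nonneg ‖a‖, sq_nonneg ‖b‖, sq_nonneg ‖c‖, sq_nonneg ‖d‖]
  · linarith

theorem Complex.sq_norm_add_mul_of_norm_eq_one (b g : ℂ) {w : ℂ} (hw : ‖w‖ = 1) :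
    ‖b + g * w‖ ^ 2 = ‖b‖ ^ 2 + ‖g‖ ^ 2 + 2 * (b * conj g * conj w).re := by
  simp only [Complex.sq_norm, Complex.normSq_add, map_mul, mul_assoc]
  rw [Complex.normSq_eq_norm_sq w, hw]
  ring

theorem eq_zero_or_of_mul_re_const_on_circle {S c : ℝ} {u v : ℂ}
    (h : ∀ w : ℂ, ‖w‖ = 1 → (S + 2 * (u * conj w).re) * (2 * (v * conj w).re) = c) :
    S = 0 ∨ v = 0 ∧ c = 0 := by
  have hodd (w : ℂ) (hw : ‖w‖ = 1) : S * (v * conj w).re = 0 := by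
    have h' := h (-w) (by rwa [norm_neg])
    simp only [map_neg, mul_neg, Complex.neg_re] at h'
    linear_combination (h w hw - h') / 4
  refine or_iff_not_imp_left.mpr fun hS => ?_
  have hv : v = 0 := by
    refine Complex.ext ?_ ?_
    · simpa [hS] using hodd 1 (by simp)
    · simpa [hS] using hodd Complex.I (by simp)
  subst hv
  simpa [eq_comm] using h 1 (by simp)

/-- **Lemma 3.1**. -/
theorem stmt9 (α β γ α' β' γ' δ' : ℂ)
    (h : ∀ z₁ z₂ : ℂ,
      opNorm2 !![α * z₁, β * z₁ + γ * z₂; 0, 0] =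
        opNorm2 !![α' * z₁, β' * z₁ + γ' * z₂; 0, δ' * z₂]) :
    ‖γ‖ ^ 2 = ‖γ'‖ ^ 2 + ‖δ'‖ ^ 2 ∧
    ‖α‖ ^ 2 + ‖β‖ ^ 2 = ‖α'‖ ^ 2 + ‖β'‖ ^ 2 ∧
    ‖β‖ * ‖γ‖ ≤ ‖β'‖ * ‖γ'‖ ∧
    (‖β‖ * ‖γ‖ = ‖β'‖ * ‖γ'‖ → α' * δ' = 0) := by
  have hN (z₁ z₂ : ℂ) : opNorm2 !![α' * z₁, β' * z₁ + γ' * z₂; 0, δ' * z₂] ^ 2 =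
      ‖α * z₁‖ ^ 2 + ‖β * z₁ + γ * z₂‖ ^ 2 := by
    rw [← h, opNorm2_fin_two_sq_of_mul_eq_mul (by simp)]
    simp
  have hγ : ‖γ‖ ^ 2 = ‖γ'‖ ^ 2 + ‖δ'‖ ^ 2 := by
    simpa [opNorm2_fin_two_sq_of_mul_eq_mul] using (hN 0 1).symm
  have hαβ : ‖α‖ ^ 2 + ‖β‖ ^ 2 = ‖α'‖ ^ 2 + ‖β'‖ ^ 2 := by
    simpa [opNorm2_fin_two_sq_of_mul_eq_mul] using (hN 1 0).symm
  have hcircle (w : ℂ) (hw : ‖w‖ = 1) :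
      (‖α‖ ^ 2 + ‖β‖ ^ 2 + ‖γ‖ ^ 2 + 2 * (β * conj γ * conj w).re) *
        (2 * ((β' * conj γ' - β * conj γ) * conj w).re) = ‖α' * δ'‖ ^ 2 := by
    have key := opNorm2_fin_two_sq_mul_sub (α' * 1) (β' * 1 + γ' * w) 0 (δ' * w)
    rw [hN 1 w] at key
    simp only [mul_one, mul_zero, sub_zero, norm_zero, norm_mul, hw,
      Complex.sq_norm_add_mul_of_norm_eq_one _ _ hw] at key
    rw [sub_mul, Complex.sub_re, norm_mul]
    linear_combination
      key + (‖α‖ ^ 2 + ‖β‖ ^ 2 + ‖γ‖ ^ 2 + 2 * (β * conj γ * conj w).re) * (hαβ + hγ)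
  rcases eq_zero_or_of_mul_re_const_on_circle hcircle with hS | ⟨hu, hαδ⟩
  · have hβ : β = 0 := by
      rw [← norm_eq_zero, ← pow_eq_zero_iff two_ne_zero]
      linarith [sq_nonneg ‖α‖, sq_nonneg ‖β‖, sq_nonneg ‖γ‖]
    have hδ' : δ' = 0 := by
      rw [← norm_eq_zero, ← pow_eq_zero_iff two_ne_zero]
      linarith [sq_nonneg ‖α‖, sq_nonneg ‖β‖, sq_nonneg ‖γ‖, sq_nonneg ‖γ'‖, sq_nonneg ‖δ'‖]
    exact ⟨hγ, hαβ, by rw [hβ, norm_zero, zero_mul]; positivity, fun _ => by simp [hδ']⟩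
  · have hu : ‖β * conj γ‖ = ‖β' * conj γ'‖ := by rw [sub_eq_zero.mp hu]
    simp only [norm_mul, Complex.norm_conj] at hu
    exact ⟨hγ, hαβ, hu.le, fun _ => by simpa using hαδ⟩
end

section
/- Let α, β, γ, α', β', γ', δ' be complex numbers with γ' ≠ 0 such that ‖[[αz₁, βz₁+γz₂],[0,0]]‖ = ‖[[α'z₁, β'z₁+γ'z₂],[0, δ'z₂]]‖ for every z₁, z₂ ∈ ℂ. Then α'δ' = 0. -/
open Complex Matrix

theorem ContinuousLinearMap.sq_opNorm_le_of_sq_norm_apply_le {𝕜 E F : Type*}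
    [NontriviallyNormedField 𝕜] [SeminormedAddCommGroup E] [SeminormedAddCommGroup F]
    [NormedSpace 𝕜 E] [NormedSpace 𝕜 F] (f : E →L[𝕜] F) {C : ℝ} (hC : 0 ≤ C)
    (h : ∀ x, ‖f x‖ ^ 2 ≤ C * ‖x‖ ^ 2) : ‖f‖ ^ 2 ≤ C := by
  have hf : ‖f‖ ≤ √C := f.opNorm_le_bound (Real.sqrt_nonneg C) fun x => by
    simpa [Real.sqrt_mul hC, Real.sqrt_sq (norm_nonneg _)] using Real.sqrt_le_sqrt (h x)
  calc ‖f‖ ^ 2 ≤ √C ^ 2 := pow_le_pow_left₀ (norm_nonneg f) hf 2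
    _ = C := Real.sq_sqrt hC

theorem sq_norm_mul_sub_mul_le {R : Type*} [SeminormedRing R] (a b c d : R) :
    ‖a * d - b * c‖ ^ 2 ≤ (‖a‖ ^ 2 + ‖b‖ ^ 2) * (‖c‖ ^ 2 + ‖d‖ ^ 2) := by
  have h : ‖a * d - b * c‖ ≤ ‖a‖ * ‖d‖ + ‖b‖ * ‖c‖ :=
    (norm_sub_le _ _).trans (add_le_add (norm_mul_le a d) (norm_mul_le b c))
  nlinarith [sq_nonneg (‖a‖ * ‖c‖ - ‖b‖ * ‖d‖), norm_nonneg (a * d - b * c)]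

theorem Complex.sq_norm_add_add_sq_norm_sub (x y : ℂ) :
    ‖x + y‖ ^ 2 + ‖x - y‖ ^ 2 = 2 * (‖x‖ ^ 2 + ‖y‖ ^ 2) := by
  simpa only [sq] using parallelogram_law_with_norm ℂ x y

namespace Matrix

section Euclidean

variable {𝕜 n : Type*} [RCLike 𝕜] [Fintype n] [DecidableEq n]

theorem sum_sq_norm_col_le_sq_norm_toEuclideanCLM (A : Matrix n n 𝕜) (j : n) :
    ∑ i, ‖A i j‖ ^ 2 ≤ ‖toEuclideanCLM (𝕜 := 𝕜) A‖ ^ 2 := by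
  have h := (toEuclideanCLM (𝕜 := 𝕜) A).le_opNorm (EuclideanSpace.single j 1)
  rw [PiLp.norm_single, norm_one, mul_one] at h
  calc ∑ i, ‖A i j‖ ^ 2 = ‖toEuclideanCLM (𝕜 := 𝕜) A (EuclideanSpace.single j 1)‖ ^ 2 := by
        rw [EuclideanSpace.norm_sq_eq]
        simp [EuclideanSpace.single, mulVec_single]
    _ ≤ _ := pow_le_pow_left₀ (norm_nonneg _) h 2

theorem norm_toEuclideanCLM_conjTranspose (A : Matrix n n 𝕜) :
    ‖toEuclideanCLM (𝕜 := 𝕜) Aᴴ‖ = ‖toEuclideanCLM (𝕜 := 𝕜) A‖ := by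
  rw [← star_eq_conjTranspose, map_star, ContinuousLinearMap.star_eq_adjoint]
  exact ContinuousLinearMap.adjoint.norm_map _

theorem sum_sq_norm_row_le_sq_norm_toEuclideanCLM (A : Matrix n n 𝕜) (i : n) :
    ∑ j, ‖A i j‖ ^ 2 ≤ ‖toEuclideanCLM (𝕜 := 𝕜) A‖ ^ 2 := by
  simpa [norm_toEuclideanCLM_conjTranspose] using sum_sq_norm_col_le_sq_norm_toEuclideanCLM Aᴴ i

end Euclidean

end Matrix

noncomputable def frobNormSq (M : Matrix (Fin 2) (Fin 2) ℂ) : ℝ :=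
  ‖M 0 0‖ ^ 2 + ‖M 0 1‖ ^ 2 + ‖M 1 0‖ ^ 2 + ‖M 1 1‖ ^ 2

def conjRot (v : EuclideanSpace ℂ (Fin 2)) : EuclideanSpace ℂ (Fin 2) :=
  !₂[-starRingEnd ℂ (v 1), starRingEnd ℂ (v 0)]

section TwoByTwo

variable (M : Matrix (Fin 2) (Fin 2) ℂ)

theorem frobNormSq_nonneg : 0 ≤ frobNormSq M := by
  unfold frobNormSq
  positivity

theorem sq_norm_det_le_frobNormSq_sq : ‖M.det‖ ^ 2 ≤ frobNormSq M ^ 2 := by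
  have h := sq_norm_mul_sub_mul_le (M 0 0) (M 0 1) (M 1 0) (M 1 1)
  rw [det_fin_two]
  unfold frobNormSq
  nlinarith [sq_nonneg ‖M 0 0‖, sq_nonneg ‖M 0 1‖, sq_nonneg ‖M 1 0‖, sq_nonneg ‖M 1 1‖]

theorem sq_norm_toEuclideanCLM_apply (v : EuclideanSpace ℂ (Fin 2)) :
    ‖toEuclideanCLM (𝕜 := ℂ) M v‖ ^ 2 =
      ‖M 0 0 * v 0 + M 0 1 * v 1‖ ^ 2 + ‖M 1 0 * v 0 + M 1 1 * v 1‖ ^ 2 := by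
  simp [EuclideanSpace.norm_sq_eq, Fin.sum_univ_two, mulVec, dotProduct]

theorem sq_norm_apply_add_sq_norm_apply_conjRot (v : EuclideanSpace ℂ (Fin 2)) :
    ‖toEuclideanCLM (𝕜 := ℂ) M v‖ ^ 2 + ‖toEuclideanCLM (𝕜 := ℂ) M (conjRot v)‖ ^ 2 =
      frobNormSq M * ‖v‖ ^ 2 := by
  rw [sq_norm_toEuclideanCLM_apply, sq_norm_toEuclideanCLM_apply, EuclideanSpace.norm_sq_eq]
  simp only [Fin.sum_univ_two, frobNormSq, conjRot, Complex.sq_norm, normSq_apply]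
  simp
  ring

theorem det_mul_sq_norm_eq (v : EuclideanSpace ℂ (Fin 2)) :
    M.det * ((‖v‖ ^ 2 : ℝ) : ℂ) =
      toEuclideanCLM (𝕜 := ℂ) M v 0 * toEuclideanCLM (𝕜 := ℂ) M (conjRot v) 1 -
        toEuclideanCLM (𝕜 := ℂ) M v 1 * toEuclideanCLM (𝕜 := ℂ) M (conjRot v) 0 := by
  have hv : ((‖v‖ ^ 2 : ℝ) : ℂ) = v 0 * starRingEnd ℂ (v 0) + v 1 * starRingEnd ℂ (v 1) := by
    simp only [EuclideanSpace.norm_sq_eq, Fin.sum_univ_two, Complex.sq_norm, mul_conj]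
    push_cast
    ring
  rw [hv, det_fin_two]
  simp [conjRot, mulVec, dotProduct, Fin.sum_univ_two]
  ring

theorem sq_norm_det_mul_le (v : EuclideanSpace ℂ (Fin 2)) :
    ‖M.det‖ ^ 2 * (‖v‖ ^ 2) ^ 2 ≤
      ‖toEuclideanCLM (𝕜 := ℂ) M v‖ ^ 2 * ‖toEuclideanCLM (𝕜 := ℂ) M (conjRot v)‖ ^ 2 := by
  have h := congrArg (‖·‖ ^ 2) (det_mul_sq_norm_eq M v)
  simp only [norm_mul, mul_pow, Complex.norm_real, Real.norm_eq_abs, sq_abs] at h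
  rw [h, EuclideanSpace.norm_sq_eq, EuclideanSpace.norm_sq_eq]
  simpa only [Fin.sum_univ_two] using sq_norm_mul_sub_mul_le _ _ _ _

theorem sq_norm_apply_mul_frobNormSq_add_le (v : EuclideanSpace ℂ (Fin 2)) :
    ‖toEuclideanCLM (𝕜 := ℂ) M v‖ ^ 2 * frobNormSq M + ‖M.det‖ ^ 2 * ‖v‖ ^ 2 ≤
      frobNormSq M ^ 2 * ‖v‖ ^ 2 := by
  have hsum := sq_norm_apply_add_sq_norm_apply_conjRot M v
  have hdet := sq_norm_det_mul_le M v
  have hF := frobNormSq_nonneg M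
  set P := ‖toEuclideanCLM (𝕜 := ℂ) M v‖ ^ 2
  set Q := ‖toEuclideanCLM (𝕜 := ℂ) M (conjRot v)‖ ^ 2
  set s := ‖v‖ ^ 2
  have hP : 0 ≤ P := by positivity
  have hQ : 0 ≤ Q := by positivity
  rcases (show 0 ≤ s by positivity).eq_or_lt with hs | hs
  · rw [← hs] at hsum hdet ⊢
    nlinarith
  · have hDQ : ‖M.det‖ ^ 2 * s ≤ frobNormSq M * Q :=
      le_of_mul_le_mul_left (by nlinarith) hs
    nlinarith

theorem opNorm2_sq_le_frobNormSq : opNorm2 M ^ 2 ≤ frobNormSq M :=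
  (toEuclideanCLM (𝕜 := ℂ) M).sq_opNorm_le_of_sq_norm_apply_le (frobNormSq_nonneg M) fun v => by
    nlinarith [sq_norm_apply_add_sq_norm_apply_conjRot M v,
      sq_nonneg ‖toEuclideanCLM (𝕜 := ℂ) M (conjRot v)‖]

theorem opNorm2_sq_mul_frobNormSq_add_le :
    opNorm2 M ^ 2 * frobNormSq M + ‖M.det‖ ^ 2 ≤ frobNormSq M ^ 2 := by
  have hD := sq_norm_det_le_frobNormSq_sq M
  rcases (frobNormSq_nonneg M).eq_or_lt with hF | hF
  · rw [← hF] at hD ⊢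
    nlinarith
  · have h := (toEuclideanCLM (𝕜 := ℂ) M).sq_opNorm_le_of_sq_norm_apply_le
      (div_nonneg (sub_nonneg.2 hD) hF.le) fun v => by
        rw [div_mul_eq_mul_div, le_div_iff₀ hF]
        nlinarith [sq_norm_apply_mul_frobNormSq_add_le M v]
    rw [le_div_iff₀ hF] at h
    exact le_sub_iff_add_le.1 h

theorem det_eq_zero_of_opNorm2_sq_eq_frobNormSq (h : opNorm2 M ^ 2 = frobNormSq M) :
    M.det = 0 := by
  have hle := opNorm2_sq_mul_frobNormSq_add_le M
  rw [h] at hle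
  simpa using (show ‖M.det‖ ^ 2 ≤ 0 by linarith)

end TwoByTwo

theorem opNorm2_sq_eq_of_second_row_zero (a b : ℂ) :
    opNorm2 !![a, b; 0, 0] ^ 2 = ‖a‖ ^ 2 + ‖b‖ ^ 2 := by
  refine le_antisymm ((opNorm2_sq_le_frobNormSq _).trans_eq (by simp [frobNormSq])) ?_
  simpa [opNorm2, Fin.sum_univ_two] using sum_sq_norm_row_le_sq_norm_toEuclideanCLM !![a, b; 0, 0] 0

theorem opNorm2_sq_eq_of_first_col_zero (b d : ℂ) :
    opNorm2 !![0, b; 0, d] ^ 2 = ‖b‖ ^ 2 + ‖d‖ ^ 2 := by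
  refine le_antisymm ((opNorm2_sq_le_frobNormSq _).trans_eq (by simp [frobNormSq])) ?_
  simpa [opNorm2, Fin.sum_univ_two] using sum_sq_norm_col_le_sq_norm_toEuclideanCLM !![0, b; 0, d] 1

theorem stmt10_general (α β γ α' β' γ' δ' : ℂ)
    (h : ∀ z₁ z₂ : ℂ,
      opNorm2 !![α * z₁, β * z₁ + γ * z₂; 0, 0] =
        opNorm2 !![α' * z₁, β' * z₁ + γ' * z₂; 0, δ' * z₂]) :
    α' * δ' = 0 := by
  have h₁₀ := h 1 0
  have h₀₁ := h 0 1
  have hp := h 1 1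
  have hm := h 1 (-1)
  simp only [mul_one, mul_zero, add_zero, zero_add, mul_neg, ← sub_eq_add_neg] at h₁₀ h₀₁ hp hm
  have hαβ : ‖α‖ ^ 2 + ‖β‖ ^ 2 = ‖α'‖ ^ 2 + ‖β'‖ ^ 2 := by
    rw [← opNorm2_sq_eq_of_second_row_zero, h₁₀, opNorm2_sq_eq_of_second_row_zero]
  have hγ : ‖γ‖ ^ 2 = ‖γ'‖ ^ 2 + ‖δ'‖ ^ 2 := by
    simpa using (opNorm2_sq_eq_of_second_row_zero 0 γ).symm.trans
      (h₀₁ ▸ opNorm2_sq_eq_of_first_col_zero γ' δ')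
  have hR : opNorm2 !![α', β' + γ'; 0, δ'] ^ 2 = frobNormSq !![α', β' + γ'; 0, δ'] := by
    refine le_antisymm (opNorm2_sq_le_frobNormSq _) ?_
    have hRm := opNorm2_sq_le_frobNormSq !![α', β' - γ'; 0, -δ']
    rw [← hm, opNorm2_sq_eq_of_second_row_zero] at hRm
    rw [← hp, opNorm2_sq_eq_of_second_row_zero]
    simp only [frobNormSq, of_apply, cons_val', cons_val_zero, cons_val_one, empty_val',
      cons_val_fin_one, norm_zero, norm_neg] at hRm ⊢
    linarith [sq_norm_add_add_sq_norm_sub β γ, sq_norm_add_add_sq_norm_sub β' γ']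
  simpa [det_fin_two] using det_eq_zero_of_opNorm2_sq_eq_frobNormSq _ hR

/-- **Lemma 3.2**. -/
theorem stmt10 (α β γ α' β' γ' δ' : ℂ) (hγ' : γ' ≠ 0)
    (h : ∀ z₁ z₂ : ℂ,
      opNorm2 !![α * z₁, β * z₁ + γ * z₂; 0, 0] =
        opNorm2 !![α' * z₁, β' * z₁ + γ' * z₂; 0, δ' * z₂]) :
    α' * δ' = 0 :=
  stmt10_general α β γ α' β' γ' δ' h
end

section
/- There exist no invertible upper triangular matrices X₁, X₂, Y₁, Y₂ ∈ M₂(ℂ) such that ‖X₁ · [[z₁, z₂],[0,0]] · X₂‖ = ‖Y₁ · [[z₁, 0],[0, z₂]] · Y₂‖ for every z₁, z₂ ∈ ℂ. -/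
/-!
Write `‖·‖_F` for the Frobenius norm. Always `‖M‖ ≤ ‖M‖_F`, with equality when `M` has a single
nonzero row or column, and for an invertible `2 × 2` matrix the inequality is strict, since then
`‖M‖² ≤ ‖M‖_F² - |det M|² / ‖M‖_F²`.

Put `L z = X₁ [[z₁, z₂], [0, 0]] X₂` and `N z = Y₁ diag(z₁, z₂) Y₂`. Both `z ↦ ‖L z‖_F²` and
`z ↦ ‖N z‖_F²` obey the parallelogram law `f(1,1) + f(1,-1) = 2 f(1,0) + 2 f(0,1)`. Every `L z`
has zero second row, so `‖N z‖² = ‖L z‖² = ‖L z‖_F²` and `z ↦ ‖N z‖²` obeys the parallelogram law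
too. But `N(1,0)` has zero second row and `N(0,1)` zero first column, so `‖N‖² = ‖N‖_F²` at these
two points, whereas `N(1,1) = Y₁ Y₂` is invertible, so `‖N(1,1)‖² < ‖N(1,1)‖_F²`: the two laws
are incompatible.
-/

open Matrix WithLp ComplexConjugate

lemma ContinuousLinearMap.opNorm_sq_le {𝕜 E F : Type*} [NontriviallyNormedField 𝕜]
    [SeminormedAddCommGroup E] [SeminormedAddCommGroup F] [NormedSpace 𝕜 E] [NormedSpace 𝕜 F]
    (T : E →L[𝕜] F) {c : ℝ} (hc : 0 ≤ c) (h : ∀ x, ‖T x‖ ^ 2 ≤ c * ‖x‖ ^ 2) : ‖T‖ ^ 2 ≤ c := by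
  have : ‖T‖ ≤ √c := T.opNorm_le_bound (Real.sqrt_nonneg c) fun x ↦ by
    rw [← Real.sqrt_sq (norm_nonneg (T x)), ← Real.sqrt_sq (norm_nonneg x), ← Real.sqrt_mul hc]
    exact Real.sqrt_le_sqrt (h x)
  simpa [Real.sq_sqrt hc] using pow_le_pow_left₀ (norm_nonneg T) this 2

section Frobenius

variable {l m n p 𝕜 : Type*} [Fintype l] [Fintype m] [Fintype n] [Fintype p] [RCLike 𝕜]

def frobSq (A : Matrix m n 𝕜) : ℝ := ∑ i, ∑ j, ‖A i j‖ ^ 2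

lemma frobSq_nonneg (A : Matrix m n 𝕜) : 0 ≤ frobSq A := by
  unfold frobSq
  positivity

lemma frobSq_pos {A : Matrix m n 𝕜} (hA : A ≠ 0) : 0 < frobSq A := by
  obtain ⟨i, j, hij⟩ : ∃ i j, A i j ≠ 0 := by
    by_contra! h
    exact hA (Matrix.ext h)
  exact Finset.sum_pos' (fun _ _ ↦ by positivity) ⟨i, Finset.mem_univ i,
    Finset.sum_pos' (fun _ _ ↦ by positivity) ⟨j, Finset.mem_univ j, by positivity⟩⟩

lemma frobSq_eq_sum_row_of_eq_zero {A : Matrix m n 𝕜} {i₀ : m}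
    (h : ∀ i ≠ i₀, A i = 0) : frobSq A = ∑ j, ‖A i₀ j‖ ^ 2 :=
  Finset.sum_eq_single i₀ (fun i _ hi ↦ by simp [h i hi]) (by simp)

lemma frobSq_eq_sum_col_of_eq_zero {A : Matrix m n 𝕜} {j₀ : n}
    (h : ∀ i, ∀ j ≠ j₀, A i j = 0) : frobSq A = ∑ i, ‖A i j₀‖ ^ 2 :=
  Finset.sum_congr rfl fun i _ ↦
    Finset.sum_eq_single j₀ (fun j _ hj ↦ by simp [h i j hj]) (by simp)

lemma frobSq_add_add_frobSq_sub (A B : Matrix m n 𝕜) :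
    frobSq (A + B) + frobSq (A - B) = 2 * frobSq A + 2 * frobSq B := by
  simp only [frobSq, ← Finset.sum_add_distrib, Finset.mul_sum, Matrix.add_apply,
    Matrix.sub_apply]
  refine Finset.sum_congr rfl fun i _ ↦ Finset.sum_congr rfl fun j _ ↦ ?_
  linear_combination parallelogram_law_with_norm 𝕜 (A i j) (B i j)

lemma frobSq_mul_add_mul_add_frobSq_mul_sub_mul (X : Matrix l m 𝕜) (R S : Matrix m n 𝕜)
    (Y : Matrix n p 𝕜) :
    frobSq (X * (R + S) * Y) + frobSq (X * (R - S) * Y) =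
      2 * frobSq (X * R * Y) + 2 * frobSq (X * S * Y) := by
  rw [Matrix.mul_add, Matrix.add_mul, Matrix.mul_sub, Matrix.sub_mul]
  exact frobSq_add_add_frobSq_sub _ _

end Frobenius

section OperatorNorm

variable {n 𝕜 : Type*} [Fintype n] [DecidableEq n] [RCLike 𝕜]

lemma sum_norm_mulVec_sq_le (M : Matrix n n 𝕜) (x : n → 𝕜) :
    ∑ i, ‖(M *ᵥ x) i‖ ^ 2 ≤ ‖toEuclideanCLM (𝕜 := 𝕜) M‖ ^ 2 * ∑ j, ‖x j‖ ^ 2 := by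
  have h := (toEuclideanCLM (𝕜 := 𝕜) M).le_opNorm (toLp 2 x)
  rw [toEuclideanCLM_toLp] at h
  have := pow_le_pow_left₀ (norm_nonneg _) h 2
  rwa [mul_pow, EuclideanSpace.norm_sq_eq, EuclideanSpace.norm_sq_eq] at this

lemma norm_toEuclideanCLM_sq_le_frobSq (M : Matrix n n 𝕜) :
    ‖toEuclideanCLM (𝕜 := 𝕜) M‖ ^ 2 ≤ frobSq M := by
  refine ContinuousLinearMap.opNorm_sq_le _ (frobSq_nonneg M) fun x ↦ ?_
  rw [EuclideanSpace.norm_sq_eq, EuclideanSpace.norm_sq_eq, frobSq, Finset.sum_mul]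
  refine Finset.sum_le_sum fun i _ ↦ ?_
  calc ‖(toEuclideanCLM (𝕜 := 𝕜) M x) i‖ ^ 2 ≤ (∑ j, ‖M i j‖ * ‖x j‖) ^ 2 := by
        gcongr
        simpa [mulVec, dotProduct] using norm_sum_le_of_le _ fun j _ ↦ norm_mul_le _ _
    _ ≤ (∑ j, ‖M i j‖ ^ 2) * ∑ j, ‖x j‖ ^ 2 := Finset.sum_mul_sq_le_sq_mul_sq _ _ _

lemma norm_toEuclideanCLM_sq_eq_frobSq_of_row {M : Matrix n n 𝕜} {i₀ : n}
    (h : ∀ i ≠ i₀, M i = 0) : ‖toEuclideanCLM (𝕜 := 𝕜) M‖ ^ 2 = frobSq M := by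
  refine (norm_toEuclideanCLM_sq_le_frobSq M).antisymm ?_
  have hMx : (M *ᵥ star (M i₀)) i₀ = (frobSq M : 𝕜) := by
    simp [frobSq_eq_sum_row_of_eq_zero h, mulVec, dotProduct, RCLike.mul_conj]
  have hx : ∑ j, ‖star (M i₀) j‖ ^ 2 = frobSq M := by simp [frobSq_eq_sum_row_of_eq_zero h]
  have hle : frobSq M ^ 2 ≤ ∑ i, ‖(M *ᵥ star (M i₀)) i‖ ^ 2 := by
    simpa [hMx, abs_of_nonneg (frobSq_nonneg M)] using
      Finset.single_le_sum (fun i _ ↦ sq_nonneg ‖(M *ᵥ star (M i₀)) i‖) (Finset.mem_univ i₀)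
  have key := hx ▸ sum_norm_mulVec_sq_le M (star (M i₀))
  rcases (frobSq_nonneg M).eq_or_lt with hF | hF
  · rw [← hF]
    positivity
  · nlinarith

lemma norm_toEuclideanCLM_sq_eq_frobSq_of_col {M : Matrix n n 𝕜} {j₀ : n}
    (h : ∀ i, ∀ j ≠ j₀, M i j = 0) : ‖toEuclideanCLM (𝕜 := 𝕜) M‖ ^ 2 = frobSq M := by
  refine (norm_toEuclideanCLM_sq_le_frobSq M).antisymm ?_
  simpa [frobSq_eq_sum_col_of_eq_zero h, Pi.single_apply, apply_ite] using
    sum_norm_mulVec_sq_le M (Pi.single j₀ 1)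

end OperatorNorm

section FinTwo

variable {𝕜 : Type*} [RCLike 𝕜]

/-- Its second column `(-x̄₁, x̄₀)` is orthogonal to `x` and has the same norm. -/
def orthoFrame (x : Fin 2 → 𝕜) : Matrix (Fin 2) (Fin 2) 𝕜 :=
  !![x 0, -conj (x 1); x 1, conj (x 0)]

lemma norm_sq_add_norm_sq_orthoFrame_row (x : Fin 2 → 𝕜) (a b : 𝕜) :
    ‖a * x 0 + b * x 1‖ ^ 2 + ‖-(a * conj (x 1)) + b * conj (x 0)‖ ^ 2 =
      (‖a‖ ^ 2 + ‖b‖ ^ 2) * (‖x 0‖ ^ 2 + ‖x 1‖ ^ 2) := by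
  apply RCLike.ofReal_injective (K := 𝕜)
  push_cast
  simp only [← RCLike.mul_conj, map_add, map_mul, map_neg, RCLike.conj_conj]
  ring

lemma frobSq_mul_orthoFrame (M : Matrix (Fin 2) (Fin 2) 𝕜) (x : Fin 2 → 𝕜) :
    frobSq (M * orthoFrame x) = frobSq M * (‖x 0‖ ^ 2 + ‖x 1‖ ^ 2) := by
  simp only [frobSq, orthoFrame, Fin.sum_univ_two, mul_apply, Fin.isValue, of_apply, cons_val',
    cons_val_zero, cons_val_fin_one, cons_val_one, mul_neg]
  linear_combination norm_sq_add_norm_sq_orthoFrame_row x (M 0 0) (M 0 1) +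
    norm_sq_add_norm_sq_orthoFrame_row x (M 1 0) (M 1 1)

lemma det_orthoFrame (x : Fin 2 → 𝕜) :
    (orthoFrame x).det = ((‖x 0‖ ^ 2 + ‖x 1‖ ^ 2 : ℝ) : 𝕜) := by
  push_cast
  simp [orthoFrame, det_fin_two, ← RCLike.mul_conj]
  ring

lemma mul_orthoFrame_apply_zero (M : Matrix (Fin 2) (Fin 2) 𝕜) (x : Fin 2 → 𝕜) (i : Fin 2) :
    (M * orthoFrame x) i 0 = (M *ᵥ x) i := by
  simp [orthoFrame, mul_apply, mulVec, dotProduct, Fin.sum_univ_two]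

lemma norm_det_fin_two_sq_le (A : Matrix (Fin 2) (Fin 2) 𝕜) :
    ‖A.det‖ ^ 2 ≤ (‖A 0 0‖ ^ 2 + ‖A 1 0‖ ^ 2) * (‖A 0 1‖ ^ 2 + ‖A 1 1‖ ^ 2) := by
  have h : ‖A.det‖ ≤ ‖A 0 0‖ * ‖A 1 1‖ + ‖A 1 0‖ * ‖A 0 1‖ := by
    rw [det_fin_two, ← norm_mul, ← norm_mul, mul_comm (A 0 1)]
    exact norm_sub_le _ _
  nlinarith [sq_nonneg (‖A 0 0‖ * ‖A 0 1‖ - ‖A 1 0‖ * ‖A 1 1‖), norm_nonneg A.det,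
    mul_nonneg (norm_nonneg (A 0 0)) (norm_nonneg (A 1 1)),
    mul_nonneg (norm_nonneg (A 1 0)) (norm_nonneg (A 0 1))]

lemma norm_toEuclideanCLM_sq_le_frobSq_sub (M : Matrix (Fin 2) (Fin 2) 𝕜) :
    ‖toEuclideanCLM (𝕜 := 𝕜) M‖ ^ 2 ≤ frobSq M - ‖M.det‖ ^ 2 / frobSq M := by
  set F := frobSq M
  set D := ‖M.det‖
  rcases (frobSq_nonneg M).eq_or_lt with hF | hF
  · simpa [F, ← hF] using norm_toEuclideanCLM_sq_le_frobSq M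
  have hDF : D ^ 2 ≤ F ^ 2 := by
    have hF2 : F = (‖M 0 0‖ ^ 2 + ‖M 1 0‖ ^ 2) + (‖M 0 1‖ ^ 2 + ‖M 1 1‖ ^ 2) := by
      simp only [F, frobSq, Fin.sum_univ_two]
      ring
    nlinarith [norm_det_fin_two_sq_le M,
      sq_nonneg (‖M 0 0‖ ^ 2 + ‖M 1 0‖ ^ 2 - (‖M 0 1‖ ^ 2 + ‖M 1 1‖ ^ 2))]
  refine ContinuousLinearMap.opNorm_sq_le _ ?_ fun x ↦ ?_
  · rw [sub_nonneg, div_le_iff₀ hF]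
    nlinarith
  -- `t = ‖M x‖²` and `u` are the squared column norms of `A`; they satisfy `t + u = F X` and,
  -- by Hadamard's inequality, `D² X² ≤ t u`, which confines `t / X` below the larger root of
  -- `s² - F s + D² = 0`, itself at most `F - D² / F`.
  set A := M * orthoFrame (ofLp x)
  set X := ‖x‖ ^ 2
  set t := ‖A 0 0‖ ^ 2 + ‖A 1 0‖ ^ 2
  set u := ‖A 0 1‖ ^ 2 + ‖A 1 1‖ ^ 2
  have hX : X = ‖x 0‖ ^ 2 + ‖x 1‖ ^ 2 := by
    simp [X, EuclideanSpace.norm_sq_eq, Fin.sum_univ_two]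
  have ht : ‖toEuclideanCLM (𝕜 := 𝕜) M x‖ ^ 2 = t := by
    simp [t, A, EuclideanSpace.norm_sq_eq, Fin.sum_univ_two, mul_orthoFrame_apply_zero]
  have hsum : t + u = F * X := by
    rw [hX, ← frobSq_mul_orthoFrame]
    simp only [t, u, frobSq, Fin.sum_univ_two]
    ring
  have hdet : (D * X) ^ 2 ≤ t * u := by
    have : ‖A.det‖ = D * X := by
      rw [det_mul, det_orthoFrame, norm_mul, ← hX, RCLike.norm_ofReal,
        abs_of_nonneg (by positivity)]
    exact this ▸ norm_det_fin_two_sq_le A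
  have ht0 : 0 ≤ t := by positivity
  have hu0 : 0 ≤ u := by positivity
  have key : F * t + D ^ 2 * X ≤ F ^ 2 * X := by
    rcases (sq_nonneg ‖x‖).eq_or_lt with hX0 | hX0
    · have : t = 0 := by nlinarith
      simp [this, X, ← hX0]
    · have : 0 ≤ X * (F ^ 2 * X - F * t - D ^ 2 * X) := by nlinarith [sq_nonneg (F * X - t)]
      nlinarith [nonneg_of_mul_nonneg_right this hX0]
  rw [ht, sub_mul, div_mul_eq_mul_div, le_sub_iff_add_le, ← le_sub_iff_add_le', div_le_iff₀ hF]
  nlinarith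

lemma norm_toEuclideanCLM_sq_lt_frobSq {M : Matrix (Fin 2) (Fin 2) 𝕜} (hM : M.det ≠ 0) :
    ‖toEuclideanCLM (𝕜 := 𝕜) M‖ ^ 2 < frobSq M := by
  have hF := frobSq_pos (A := M) fun h ↦ hM (by simp [h])
  calc _ ≤ frobSq M - ‖M.det‖ ^ 2 / frobSq M := norm_toEuclideanCLM_sq_le_frobSq_sub M
    _ < frobSq M := sub_lt_self _ (by positivity)

end FinTwo

section UpperTriangular

variable {α : Type*} [Semiring α] {A R B : Matrix (Fin 2) (Fin 2) α}

lemma mul_mul_row_eq_zero (hA : A 1 0 = 0) (hR : ∀ j, R 1 j = 0) :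
    ∀ i ≠ 0, (A * R * B) i = 0 := by
  intro i hi
  obtain rfl : i = 1 := by omega
  ext j
  simp [mul_apply, Fin.sum_univ_two, hA, hR]

lemma mul_mul_col_eq_zero (hR : ∀ i, R i 0 = 0) (hB : B 1 0 = 0) :
    ∀ i, ∀ j ≠ 1, (A * R * B) i j = 0 := by
  intro i j hj
  obtain rfl : j = 0 := by omega
  simp [mul_apply, Fin.sum_univ_two, hR, hB]

end UpperTriangular

/-- There exist no invertible upper triangular `X₁, X₂, Y₁, Y₂ ∈ M₂(ℂ)` such that
`‖X₁ [[z₁,z₂],[0,0]] X₂‖ = ‖Y₁ [[z₁,0],[0,z₂]] Y₂‖` for all `z₁, z₂ ∈ ℂ`. -/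
theorem stmt11 :
    ¬ ∃ X₁ X₂ Y₁ Y₂ : Matrix (Fin 2) (Fin 2) ℂ,
      IsUnit X₁ ∧ IsUnit X₂ ∧ IsUnit Y₁ ∧ IsUnit Y₂ ∧
      X₁ 1 0 = 0 ∧ X₂ 1 0 = 0 ∧ Y₁ 1 0 = 0 ∧ Y₂ 1 0 = 0 ∧
      ∀ z₁ z₂ : ℂ,
        opNorm2 (X₁ * !![z₁, z₂; 0, 0] * X₂) = opNorm2 (Y₁ * !![z₁, 0; 0, z₂] * Y₂) := by
  rintro ⟨X₁, X₂, Y₁, Y₂, -, -, hY₁, hY₂, hX₁₀, -, hY₁₀, hY₂₀, h⟩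
  set L := fun z₁ z₂ : ℂ ↦ X₁ * !![z₁, z₂; 0, 0] * X₂
  set N := fun z₁ z₂ : ℂ ↦ Y₁ * !![z₁, 0; 0, z₂] * Y₂
  have parL : frobSq (L 1 1) + frobSq (L 1 (-1)) = 2 * frobSq (L 1 0) + 2 * frobSq (L 0 1) := by
    convert frobSq_mul_add_mul_add_frobSq_mul_sub_mul X₁ !![1, 0; 0, 0] !![0, 1; 0, 0] X₂
      using 5 <;> ext i j <;> fin_cases i <;> fin_cases j <;> simp
  have parN : frobSq (N 1 1) + frobSq (N 1 (-1)) = 2 * frobSq (N 1 0) + 2 * frobSq (N 0 1) := by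
    convert frobSq_mul_add_mul_add_frobSq_mul_sub_mul Y₁ !![1, 0; 0, 0] !![0, 0; 0, 1] Y₂
      using 5 <;> ext i j <;> fin_cases i <;> fin_cases j <;> simp
  have hNL z₁ z₂ : opNorm2 (N z₁ z₂) ^ 2 = frobSq (L z₁ z₂) := by
    rw [← h]
    exact norm_toEuclideanCLM_sq_eq_frobSq_of_row (mul_mul_row_eq_zero hX₁₀ (by simp))
  have hN_row : opNorm2 (N 1 0) ^ 2 = frobSq (N 1 0) :=
    norm_toEuclideanCLM_sq_eq_frobSq_of_row (mul_mul_row_eq_zero hY₁₀ (by simp))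
  have hN_col : opNorm2 (N 0 1) ^ 2 = frobSq (N 0 1) :=
    norm_toEuclideanCLM_sq_eq_frobSq_of_col (mul_mul_col_eq_zero (by simp) hY₂₀)
  have hN_add : opNorm2 (N 1 1) ^ 2 < frobSq (N 1 1) := by
    refine norm_toEuclideanCLM_sq_lt_frobSq ?_
    simp [N, det_fin_two_of, ((isUnit_iff_isUnit_det _).mp hY₁).ne_zero,
      ((isUnit_iff_isUnit_det _).mp hY₂).ne_zero]
  have hN_sub : opNorm2 (N 1 (-1)) ^ 2 ≤ frobSq (N 1 (-1)) := norm_toEuclideanCLM_sq_le_frobSq _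
  linarith [hNL 1 1, hNL 1 (-1), hNL 1 0, hNL 0 1]
end

section
/- For λ, z₁, z₂ ∈ ℂ let A(λ,z₁,z₂) ∈ M₄(ℂ) be the matrix with rows (λ,0,z₁,z₂), (0,λ,0,0), (0,0,λ,0), (0,0,0,λ), and let B(λ,z₁,z₂) ∈ M₄(ℂ) be the matrix with rows (λ,0,z₁,0), (0,λ,0,z₂), (0,0,λ,0), (0,0,0,λ). Then for every pair of invertible matrices X, Y ∈ M₄(ℂ) there exist λ, z₁, z₂ ∈ ℂ such that ‖X·A(λ,z₁,z₂)·X⁻¹‖ ≠ ‖Y·B(λ,z₁,z₂)·Y⁻¹‖. (Consequently, the unital completely bounded isomorphism Ψ: A(λ,z₁,z₂) ↦ B(λ,z₁,z₂) between these finite-dimensional commutative unital operator algebras is not similar to an isometric isomorphism.) -/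
/-- The operator norm of a 4×4 complex matrix acting on `ℂ⁴` with the Euclidean norm. -/
noncomputable def opNorm4 (M : Matrix (Fin 4) (Fin 4) ℂ) : ℝ :=
  ‖Matrix.toEuclideanCLM (𝕜 := ℂ) M‖

/-- The element of the algebra `𝒜_ℛ`. -/
def matA (l z₁ z₂ : ℂ) : Matrix (Fin 4) (Fin 4) ℂ :=
  !![l, 0, z₁, z₂; 0, l, 0, 0; 0, 0, l, 0; 0, 0, 0, l]

/-- The element of the algebra `𝒜_𝒟`, the image of `matA l z₁ z₂` under `Ψ`. -/
def matB (l z₁ z₂ : ℂ) : Matrix (Fin 4) (Fin 4) ℂ :=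
  !![l, 0, z₁, 0; 0, l, 0, z₂; 0, 0, l, 0; 0, 0, 0, l]

/-!
Take `λ = 0`. Each `X A(0, z₁, z₂) X⁻¹` has rank at most one, and on matrices of rank at most one
the operator norm coincides with the Frobenius norm, which comes from an inner product; so
`z ↦ ‖X A(0, z) X⁻¹‖²` satisfies the parallelogram law. On the other side `Y B(0, 1, 0) Y⁻¹` and
`Y B(0, 0, 1) Y⁻¹` have rank one while their sum has rank two. Since `‖M‖² ≤ ‖M‖_F²`, with equality
only if `rank M ≤ 1` (a unit vector attaining `‖M‖` makes every row of `M` parallel to it), the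
parallelogram law fails strictly for `z ↦ ‖Y B(0, z) Y⁻¹‖²`, so the two norms cannot agree.
-/

open scoped Matrix.Norms.L2Operator InnerProductSpace
open WithLp (toLp ofLp)

theorem ContinuousLinearMap.exists_norm_eq_one_and_norm_apply_eq_opNorm {𝕜 E F : Type*} [RCLike 𝕜]
    [NormedAddCommGroup E] [NormedSpace 𝕜 E] [ProperSpace E] [Nontrivial E]
    [SeminormedAddCommGroup F] [NormedSpace 𝕜 F] (T : E →L[𝕜] F) :
    ∃ x, ‖x‖ = 1 ∧ ‖T x‖ = ‖T‖ := by
  obtain ⟨v, hv⟩ := exists_ne (0 : E)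
  obtain ⟨x₀, hx₀, hmax⟩ := (isCompact_sphere (0 : E) 1).exists_isMaxOn
    ⟨_, mem_sphere_zero_iff_norm.mpr (norm_smul_inv_norm (𝕜 := 𝕜) hv)⟩
    (continuous_norm.comp T.continuous).continuousOn
  rw [mem_sphere_zero_iff_norm] at hx₀
  refine ⟨x₀, hx₀, le_antisymm (by simpa [hx₀] using T.le_opNorm x₀) ?_⟩
  refine T.opNorm_le_bound (norm_nonneg _) fun x ↦ ?_
  rcases eq_or_ne x 0 with rfl | hx
  · simp
  have h := hmax (mem_sphere_zero_iff_norm.mpr (norm_smul_inv_norm (𝕜 := 𝕜) hx))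
  rw [Set.mem_ofPred_eq, Function.comp_apply, map_smul, norm_smul, norm_inv, RCLike.norm_ofReal,
    abs_norm] at h
  rw [mul_comm]
  exact (inv_mul_le_iff₀ (norm_pos_iff.mpr hx)).mp h

namespace Matrix

variable {m n 𝕜 : Type*} [RCLike 𝕜]

section Rows

variable [Fintype n]

theorem mulVec_apply_eq_inner (A : Matrix m n 𝕜) (x : EuclideanSpace 𝕜 n) (i : m) :
    (A *ᵥ ofLp x) i = ⟪toLp 2 (star (A i)), x⟫_𝕜 := by
  simp [EuclideanSpace.inner_eq_star_dotProduct, mulVec, dotProduct, mul_comm]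

theorem norm_toLp_star_row_sq (A : Matrix m n 𝕜) (i : m) :
    ‖toLp 2 (star (A i))‖ ^ 2 = ∑ j, ‖A i j‖ ^ 2 := by
  simp [EuclideanSpace.norm_sq_eq]

theorem norm_inner_row_sq_le (A : Matrix m n 𝕜) (x : EuclideanSpace 𝕜 n) (i : m) :
    ‖⟪toLp 2 (star (A i)), x⟫_𝕜‖ ^ 2 ≤ (∑ j, ‖A i j‖ ^ 2) * ‖x‖ ^ 2 := by
  rw [← norm_toLp_star_row_sq, ← mul_pow]
  gcongr
  exact norm_inner_le_norm _ _

theorem exists_eq_vecMulVec_of_rank_le_one {K : Type*} [Field K]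
    {A : Matrix m n K} (h : A.rank ≤ 1) : ∃ a p, A = vecMulVec a p := by
  classical
  obtain ⟨v, hv⟩ := finrank_le_one_iff.mp h
  choose c hc using fun j ↦ hv ⟨A *ᵥ Pi.single j 1, LinearMap.mem_range_self A.mulVecLin _⟩
  refine ⟨v, c, ?_⟩
  ext i j
  have hcol := congrFun (congrArg Subtype.val (hc j)) i
  simp only [SetLike.val_smul, Pi.smul_apply, smul_eq_mul, mulVec_single, MulOpposite.op_one,
    col_apply, one_smul] at hcol
  simp [vecMulVec_apply, ← hcol, mul_comm]

end Rows

variable [Fintype m] [Fintype n]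

-- Mathlib's Frobenius norm is a `Norm` instance competing with the operator norm, so its square
-- is spelled out instead.
def frobeniusNormSq (A : Matrix m n 𝕜) : ℝ := ∑ i, ∑ j, ‖A i j‖ ^ 2

theorem frobeniusNormSq_add_add_sub (A B : Matrix m n 𝕜) :
    frobeniusNormSq (A + B) + frobeniusNormSq (A - B) =
      2 * (frobeniusNormSq A + frobeniusNormSq B) := by
  simp only [frobeniusNormSq, add_apply, sub_apply, ← Finset.sum_add_distrib, Finset.mul_sum]
  exact Finset.sum_congr rfl fun i _ ↦ Finset.sum_congr rfl fun j _ ↦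
    parallelogram_law_with_norm 𝕜 (A i j) (B i j)

theorem frobeniusNormSq_vecMulVec (a : m → 𝕜) (p : n → 𝕜) :
    frobeniusNormSq (vecMulVec a p) = ‖toLp 2 a‖ ^ 2 * ‖toLp 2 p‖ ^ 2 := by
  simp [frobeniusNormSq, vecMulVec_apply, EuclideanSpace.norm_sq_eq, mul_pow, Finset.sum_mul_sum]

theorem norm_mulVec_sq (A : Matrix m n 𝕜) (x : EuclideanSpace 𝕜 n) :
    ‖toLp 2 (A *ᵥ ofLp x)‖ ^ 2 = ∑ i, ‖⟪toLp 2 (star (A i)), x⟫_𝕜‖ ^ 2 := by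
  simp [EuclideanSpace.norm_sq_eq, mulVec_apply_eq_inner]

variable [DecidableEq n]

theorem l2_opNorm_sq_le_frobeniusNormSq (A : Matrix m n 𝕜) : ‖A‖ ^ 2 ≤ frobeniusNormSq A := by
  have hF : 0 ≤ frobeniusNormSq A := by unfold frobeniusNormSq; positivity
  suffices ‖A‖ ≤ √(frobeniusNormSq A) by
    simpa [Real.sq_sqrt hF] using pow_le_pow_left₀ (norm_nonneg A) this 2
  refine ContinuousLinearMap.opNorm_le_bound _ (Real.sqrt_nonneg _) fun x ↦ ?_
  rw [← sq_le_sq₀ (norm_nonneg _) (by positivity), mul_pow, Real.sq_sqrt hF]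
  calc ‖toLp 2 (A *ᵥ ofLp x)‖ ^ 2 = ∑ i, ‖⟪toLp 2 (star (A i)), x⟫_𝕜‖ ^ 2 := norm_mulVec_sq A x
    _ ≤ ∑ i, (∑ j, ‖A i j‖ ^ 2) * ‖x‖ ^ 2 :=
      Finset.sum_le_sum fun i _ ↦ norm_inner_row_sq_le A x i
    _ = frobeniusNormSq A * ‖x‖ ^ 2 := by rw [frobeniusNormSq, Finset.sum_mul]

theorem rank_le_one_of_l2_opNorm_sq_eq_frobeniusNormSq {A : Matrix m n 𝕜}
    (h : ‖A‖ ^ 2 = frobeniusNormSq A) : A.rank ≤ 1 := by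
  cases isEmpty_or_nonempty n
  · exact (rank_le_card_width A).trans (by simp)
  obtain ⟨x, hx, hAx⟩ := ((toEuclideanLin (m := m) (n := n) (𝕜 := 𝕜)).trans
    LinearMap.toContinuousLinearMap A).exists_norm_eq_one_and_norm_apply_eq_opNorm
  have hAx' : ‖toLp 2 (A *ᵥ ofLp x)‖ = ‖A‖ := hAx
  have hrow : ∀ i, ‖⟪x, toLp 2 (star (A i))⟫_𝕜‖ = ‖x‖ * ‖toLp 2 (star (A i))‖ := by
    intro i
    have hsq := (Finset.sum_eq_sum_iff_of_le fun i _ ↦ norm_inner_row_sq_le A x i).mp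
      (by simp only [← norm_mulVec_sq, hAx', h, hx, one_pow, mul_one, frobeniusNormSq]) i
      (Finset.mem_univ i)
    rw [← norm_toLp_star_row_sq, ← mul_pow, sq_eq_sq₀ (norm_nonneg _) (by positivity)] at hsq
    rw [norm_inner_symm, hsq, mul_comm]
  have hx0 : x ≠ 0 := by rintro rfl; simp at hx
  have hmul : ∀ i, ∃ c : 𝕜, toLp 2 (star (A i)) = c • x := fun i ↦
    (((norm_inner_eq_norm_tfae 𝕜 x _).out 0 2 :).mp (hrow i)).resolve_left hx0
  choose c hc using hmul
  suffices A = vecMulVec (fun i ↦ star (c i)) (star (ofLp x)) from this ▸ rank_vecMulVec_le _ _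
  ext i j
  simpa [vecMulVec_apply] using congrArg (fun v : EuclideanSpace 𝕜 n ↦ star (v j)) (hc i)

theorem l2_opNorm_vecMulVec (a : m → 𝕜) (p : n → 𝕜) :
    ‖vecMulVec a p‖ = ‖toLp 2 a‖ * ‖toLp 2 p‖ := by
  refine le_antisymm ?_ ?_
  · refine (sq_le_sq₀ (norm_nonneg _) (by positivity)).mp ?_
    rw [mul_pow, ← frobeniusNormSq_vecMulVec]
    exact l2_opNorm_sq_le_frobeniusNormSq _
  rcases eq_or_ne (toLp 2 p) 0 with hp | hp
  · simp [hp]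
  have hx : ‖toLp 2 (star p)‖ = ‖toLp 2 p‖ := by simp [EuclideanSpace.norm_eq]
  have hdot : p ⬝ᵥ star p = ((‖toLp 2 p‖ ^ 2 : ℝ) : 𝕜) := by
    rw [← EuclideanSpace.inner_toLp_toLp, inner_self_eq_norm_sq_to_K]; norm_cast
  have hnorm : ‖toLp 2 (vecMulVec a p *ᵥ star p)‖ =
      ‖toLp 2 a‖ * ‖toLp 2 p‖ * ‖toLp 2 (star p)‖ := by
    rw [vecMulVec_mulVec, op_smul_eq_smul, hdot, WithLp.toLp_smul, norm_smul, hx,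
      RCLike.norm_ofReal, abs_of_nonneg (by positivity)]
    ring
  have h := l2_opNorm_mulVec (vecMulVec a p) (toLp 2 (star p))
  replace h : ‖toLp 2 (vecMulVec a p *ᵥ star p)‖ ≤ ‖vecMulVec a p‖ * ‖toLp 2 (star p)‖ := h
  rw [hnorm] at h
  exact le_of_mul_le_mul_right h (by rwa [hx, norm_pos_iff])

theorem l2_opNorm_sq_eq_frobeniusNormSq_iff {A : Matrix m n 𝕜} :
    ‖A‖ ^ 2 = frobeniusNormSq A ↔ A.rank ≤ 1 := by
  refine ⟨rank_le_one_of_l2_opNorm_sq_eq_frobeniusNormSq, fun h ↦ ?_⟩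
  obtain ⟨a, p, rfl⟩ := exists_eq_vecMulVec_of_rank_le_one h
  rw [l2_opNorm_vecMulVec, mul_pow, frobeniusNormSq_vecMulVec]

theorem l2_opNorm_parallelogram_of_rank_le_one {A B : Matrix m n 𝕜} (hA : A.rank ≤ 1)
    (hB : B.rank ≤ 1) (hadd : (A + B).rank ≤ 1) (hsub : (A - B).rank ≤ 1) :
    ‖A + B‖ ^ 2 + ‖A - B‖ ^ 2 = 2 * (‖A‖ ^ 2 + ‖B‖ ^ 2) := by
  simp only [l2_opNorm_sq_eq_frobeniusNormSq_iff.mpr, hA, hB, hadd, hsub]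
  exact frobeniusNormSq_add_add_sub A B

theorem l2_opNorm_parallelogram_lt {A B : Matrix m n 𝕜} (hA : A.rank ≤ 1) (hB : B.rank ≤ 1)
    (hadd : 1 < (A + B).rank) : ‖A + B‖ ^ 2 + ‖A - B‖ ^ 2 < 2 * (‖A‖ ^ 2 + ‖B‖ ^ 2) := by
  rw [l2_opNorm_sq_eq_frobeniusNormSq_iff.mpr hA, l2_opNorm_sq_eq_frobeniusNormSq_iff.mpr hB,
    ← frobeniusNormSq_add_add_sub]
  have hlt : ‖A + B‖ ^ 2 < frobeniusNormSq (A + B) :=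
    (l2_opNorm_sq_le_frobeniusNormSq _).lt_of_ne
      (mt l2_opNorm_sq_eq_frobeniusNormSq_iff.mp hadd.not_ge)
  linarith [l2_opNorm_sq_le_frobeniusNormSq (A - B)]

end Matrix

theorem Matrix.rank_units_mul_mul_inv {n R : Type*} [Fintype n] [DecidableEq n] [CommRing R]
    (X : (Matrix n n R)ˣ) (M : Matrix n n R) :
    ((X : Matrix n n R) * M * (↑X⁻¹ : Matrix n n R)).rank = M.rank := by
  rw [rank_mul_eq_left_of_isUnit_det _ _ (isUnits_det_units _),
    rank_mul_eq_right_of_isUnit_det _ _ (isUnits_det_units _)]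

open Matrix

local notation "M₄" => Matrix (Fin 4) (Fin 4) ℂ

theorem matA_add (l z₁ z₂ l' w₁ w₂ : ℂ) :
    matA l z₁ z₂ + matA l' w₁ w₂ = matA (l + l') (z₁ + w₁) (z₂ + w₂) := by
  ext i j; fin_cases i <;> fin_cases j <;> simp [matA]

theorem matA_sub (l z₁ z₂ l' w₁ w₂ : ℂ) :
    matA l z₁ z₂ - matA l' w₁ w₂ = matA (l - l') (z₁ - w₁) (z₂ - w₂) := by
  ext i j; fin_cases i <;> fin_cases j <;> simp [matA]

theorem matB_add (l z₁ z₂ l' w₁ w₂ : ℂ) :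
    matB l z₁ z₂ + matB l' w₁ w₂ = matB (l + l') (z₁ + w₁) (z₂ + w₂) := by
  ext i j; fin_cases i <;> fin_cases j <;> simp [matB]

theorem matB_sub (l z₁ z₂ l' w₁ w₂ : ℂ) :
    matB l z₁ z₂ - matB l' w₁ w₂ = matB (l - l') (z₁ - w₁) (z₂ - w₂) := by
  ext i j; fin_cases i <;> fin_cases j <;> simp [matB]

theorem rank_matA_zero_le (z₁ z₂ : ℂ) : (matA 0 z₁ z₂).rank ≤ 1 := by
  rw [show matA 0 z₁ z₂ = vecMulVec (Pi.single 0 1) ![0, 0, z₁, z₂] by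
    ext i j; fin_cases i <;> fin_cases j <;> simp [matA, vecMulVec_apply]]
  exact rank_vecMulVec_le _ _

theorem rank_matB_zero_le {z₁ z₂ : ℂ} (h : z₁ = 0 ∨ z₂ = 0) : (matB 0 z₁ z₂).rank ≤ 1 := by
  rcases h with rfl | rfl
  · rw [show matB 0 0 z₂ = vecMulVec (Pi.single 1 1) ![0, 0, 0, z₂] by
      ext i j; fin_cases i <;> fin_cases j <;> simp [matB, vecMulVec_apply]]
    exact rank_vecMulVec_le _ _
  · rw [show matB 0 z₁ 0 = vecMulVec (Pi.single 0 1) ![0, 0, z₁, 0] by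
      ext i j; fin_cases i <;> fin_cases j <;> simp [matB, vecMulVec_apply]]
    exact rank_vecMulVec_le _ _

theorem one_lt_rank_matB_zero_one_one : 1 < (matB 0 1 1).rank := by
  have h : matB 0 1 1 * (matB 0 1 1)ᵀ = diagonal ![1, 1, 0, 0] := by
    ext i j; fin_cases i <;> fin_cases j <;> simp [matB, Matrix.mul_apply, Fin.sum_univ_four]
  have hle := rank_mul_le_left (matB 0 1 1) (matB 0 1 1)ᵀ
  rw [h, rank_diagonal] at hle
  refine lt_of_lt_of_le ?_ hle
  simp [Fintype.card_subtype, Finset.filter, Fin.univ_succ]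

/-- **Section 3 counter-example**: no pair of invertible `X, Y ∈ M₄(ℂ)` makes the unital
completely bounded isomorphism `Ψ : matA l z₁ z₂ ↦ matB l z₁ z₂` spatially isometric. -/
theorem stmt12 (X Y : (Matrix (Fin 4) (Fin 4) ℂ)ˣ) :
    ∃ l z₁ z₂ : ℂ,
      opNorm4 ((X : Matrix (Fin 4) (Fin 4) ℂ) * matA l z₁ z₂ * (↑X⁻¹ : Matrix (Fin 4) (Fin 4) ℂ)) ≠
        opNorm4 ((Y : Matrix (Fin 4) (Fin 4) ℂ) * matB l z₁ z₂ * (↑Y⁻¹ : Matrix (Fin 4) (Fin 4) ℂ)) := by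
  by_contra! h
  have key : ∀ z₁ z₂, ‖(X : M₄) * matA 0 z₁ z₂ * (↑X⁻¹ : M₄)‖ =
      ‖(Y : M₄) * matB 0 z₁ z₂ * (↑Y⁻¹ : M₄)‖ := fun z₁ z₂ ↦ h 0 z₁ z₂
  have hA := l2_opNorm_parallelogram_of_rank_le_one
    (A := (X : M₄) * matA 0 1 0 * (↑X⁻¹ : M₄)) (B := (X : M₄) * matA 0 0 1 * (↑X⁻¹ : M₄))
    (by rw [rank_units_mul_mul_inv]; exact rank_matA_zero_le 1 0)
    (by rw [rank_units_mul_mul_inv]; exact rank_matA_zero_le 0 1)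
    (by rw [← add_mul, ← mul_add, matA_add, rank_units_mul_mul_inv]
        simpa using rank_matA_zero_le 1 1)
    (by rw [← sub_mul, ← mul_sub, matA_sub, rank_units_mul_mul_inv]
        simpa using rank_matA_zero_le 1 (-1))
  have hB := l2_opNorm_parallelogram_lt
    (A := (Y : M₄) * matB 0 1 0 * (↑Y⁻¹ : M₄)) (B := (Y : M₄) * matB 0 0 1 * (↑Y⁻¹ : M₄))
    (by rw [rank_units_mul_mul_inv]; exact rank_matB_zero_le (.inr rfl))
    (by rw [rank_units_mul_mul_inv]; exact rank_matB_zero_le (.inl rfl))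
    (by rw [← add_mul, ← mul_add, matB_add, rank_units_mul_mul_inv]
        simpa using one_lt_rank_matB_zero_one_one)
  simp only [← add_mul, ← mul_add, ← sub_mul, ← mul_sub, matA_add, matA_sub, matB_add, matB_sub]
    at hA hB
  norm_num only [key] at hA
  linarith
end

section
/- Let λ ∈ 𝔻 and let u : 𝔻 → ℂ be a bounded holomorphic function on the open unit disc 𝔻. Define θ(z) = ((z − λ)/(1 − conj(λ)·z)) · u(z) for z ∈ 𝔻. Then the set {w ∈ ℂ : inf_{z ∈ 𝔻} (|u(z) − w| + |θ(z)|) = 0} is contained in {u(λ), 0}. -/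
open Metric Filter Topology

/-! If the infimum vanishes at `w`, there are points `zₙ ∈ 𝔻` with `u zₙ → w` and
`θ zₙ = b_λ(zₙ) u(zₙ) → 0`. For `w ≠ 0` this forces `b_λ(zₙ) → 0`, hence `zₙ → λ` because
`|z − λ| ≤ 2 |b_λ(z)|` on `𝔻`, and continuity of `u` at `λ` gives `w = u(λ)`. -/

theorem exists_seq_tendsto_zero_of_sInf_image_norm_add_norm_eq_zero {α E F : Type*}
    [SeminormedAddGroup E] [SeminormedAddGroup F] {s : Set α} (hs : s.Nonempty)
    {f : α → E} {g : α → F} (h : sInf ((fun x => ‖f x‖ + ‖g x‖) '' s) = 0) :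
    ∃ x : ℕ → α, (∀ n, x n ∈ s) ∧ Tendsto (f ∘ x) atTop (𝓝 0) ∧
      Tendsto (g ∘ x) atTop (𝓝 0) := by
  obtain ⟨a, -, ha_lim, ha_mem⟩ :=
    exists_seq_tendsto_sInf (hs.image (fun x => ‖f x‖ + ‖g x‖))
    ⟨0, by rintro _ ⟨x, -, rfl⟩; positivity⟩
  choose x hx_mem hx_eq using ha_mem
  rw [h] at ha_lim
  have hsum : Tendsto (fun n => ‖f (x n)‖ + ‖g (x n)‖) atTop (𝓝 0) := by
    simpa only [hx_eq] using ha_lim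
  refine ⟨x, hx_mem, ?_, ?_⟩ <;> rw [tendsto_zero_iff_norm_tendsto_zero] <;>
    refine squeeze_zero (fun n => norm_nonneg _) (fun n => ?_) hsum
  · exact le_add_of_nonneg_right (norm_nonneg _)
  · exact le_add_of_nonneg_left (norm_nonneg _)

theorem Filter.Tendsto.zero_of_mul_tendsto_zero {ι 𝕜 : Type*} [NormedField 𝕜] {l : Filter ι}
    {a b : ι → 𝕜} {w : 𝕜} (hab : Tendsto (fun i => a i * b i) l (𝓝 0))
    (hb : Tendsto b l (𝓝 w)) (hw : w ≠ 0) : Tendsto a l (𝓝 0) := by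
  have hquot := hab.div hb hw
  rw [zero_div] at hquot
  refine hquot.congr' ?_
  filter_upwards [hb.eventually_ne hw] with i hi
  exact mul_div_cancel_right₀ _ hi

theorem norm_sub_le_two_mul_norm_blaschke {l z : ℂ} (hl : ‖l‖ < 1) (hz : ‖z‖ ≤ 1) :
    ‖z - l‖ ≤ 2 * ‖(z - l) / (1 - (starRingEnd ℂ) l * z)‖ := by
  have hlz : ‖(starRingEnd ℂ) l * z‖ < 1 := by
    rw [norm_mul, Complex.norm_conj]
    nlinarith [norm_nonneg l, norm_nonneg z]
  have hden_pos : 0 < ‖1 - (starRingEnd ℂ) l * z‖ := by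
    have := norm_sub_norm_le (1 : ℂ) ((starRingEnd ℂ) l * z)
    rw [norm_one] at this
    linarith
  have hden_le : ‖1 - (starRingEnd ℂ) l * z‖ ≤ 2 := by
    have := norm_sub_le (1 : ℂ) ((starRingEnd ℂ) l * z)
    rw [norm_one] at this
    linarith
  rw [norm_div, mul_div_assoc', le_div_iff₀ hden_pos, mul_comm (2 : ℝ)]
  exact mul_le_mul_of_nonneg_left hden_le (norm_nonneg (z - l))

theorem tendsto_of_tendsto_blaschke_zero {l : ℂ} (hl : ‖l‖ < 1) {z : ℕ → ℂ}
    (hz : ∀ n, z n ∈ ball (0 : ℂ) 1)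
    (hb : Tendsto (fun n => (z n - l) / (1 - (starRingEnd ℂ) l * z n)) atTop (𝓝 0)) :
    Tendsto z atTop (𝓝 l) := by
  rw [tendsto_iff_norm_sub_tendsto_zero]
  refine squeeze_zero (fun n => norm_nonneg _)
    (fun n => norm_sub_le_two_mul_norm_blaschke hl (mem_ball_zero_iff.mp (hz n)).le) ?_
  simpa using (tendsto_zero_iff_norm_tendsto_zero.mp hb).const_mul (2 : ℝ)

theorem stmt14_general (l : ℂ) (hl : l ∈ ball (0 : ℂ) 1) (u : ℂ → ℂ)
    (hu : DifferentiableOn ℂ u (ball (0 : ℂ) 1))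
    (θ : ℂ → ℂ)
    (hθ : ∀ z : ℂ, θ z = (z - l) / (1 - (starRingEnd ℂ) l * z) * u z) :
    {w : ℂ | sInf ((fun z => ‖u z - w‖ + ‖θ z‖) '' ball (0 : ℂ) 1)
        = 0} ⊆ {u l, 0} := by
  intro w hw
  refine or_iff_not_imp_right.mpr fun hw0 => ?_
  obtain ⟨z, hz, huz, hθz⟩ :=
    exists_seq_tendsto_zero_of_sInf_image_norm_add_norm_eq_zero ⟨0, mem_ball_self one_pos⟩ hw
  have huz_w : Tendsto (u ∘ z) atTop (𝓝 w) := tendsto_sub_nhds_zero_iff.mp huz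
  have hθz' : Tendsto (fun n => (z n - l) / (1 - (starRingEnd ℂ) l * z n) * u (z n))
      atTop (𝓝 0) := by
    simpa only [Function.comp_def, hθ] using hθz
  have hz_l : Tendsto z atTop (𝓝 l) :=
    tendsto_of_tendsto_blaschke_zero (mem_ball_zero_iff.mp hl) hz
      (hθz'.zero_of_mul_tendsto_zero huz_w hw0)
  have hu_l : ContinuousAt u l := (hu.differentiableAt (isOpen_ball.mem_nhds hl)).continuousAt
  exact tendsto_nhds_unique huz_w (hu_l.tendsto.comp hz_l)

/-- **Lemma 4.1 (ii)** (function-theoretic form): if `λ ∈ 𝔻`, `u` is bounded holomorphic on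
`𝔻` and `θ = b_λ · u` where `b_λ(z) = (z − λ)/(1 − conj(λ)z)`, then
`{w : inf_{z∈𝔻}(|u(z)−w| + |θ(z)|) = 0} ⊆ {u(λ), 0}`. -/
theorem stmt14 (l : ℂ) (hl : l ∈ ball (0 : ℂ) 1) (u : ℂ → ℂ)
    (hu : DifferentiableOn ℂ u (ball (0 : ℂ) 1))
    (hub : ∃ C : ℝ, ∀ z ∈ ball (0 : ℂ) 1, ‖u z‖ ≤ C)
    (θ : ℂ → ℂ)
    (hθ : ∀ z : ℂ, θ z = (z - l) / (1 - (starRingEnd ℂ) l * z) * u z) :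
    {w : ℂ | sInf ((fun z => ‖u z - w‖ + ‖θ z‖) '' ball (0 : ℂ) 1)
        = 0} ⊆ {u l, 0} :=
  stmt14_general l hl u hu θ hθ
end

section
/- Let A ⊆ B(H) be a unital operator algebra containing every bounded operator on H of rank at most one. Then for every invertible X ∈ B(H), the completely bounded norm of the conjugation map a ↦ X a X⁻¹ restricted to A equals ‖X‖·‖X⁻¹‖; in particular A has the conjugation with lower bound property with constant δ = 1. -/
open ContinuousLinearMap InnerProductSpace

section MatrixOperators

variable {H : Type*} [NormedAddCommGroup H] [NormedSpace ℂ H]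

noncomputable def matCLM {d : ℕ} (M : Matrix (Fin d) (Fin d) (H →L[ℂ] H)) :
    PiLp 2 (fun _ : Fin d => H) →L[ℂ] PiLp 2 (fun _ : Fin d => H) :=
  (PiLp.continuousLinearEquiv 2 ℂ (fun _ : Fin d => H)).symm.toContinuousLinearMap.comp
      ((ContinuousLinearMap.pi fun i => ∑ j, (M i j).comp (ContinuousLinearMap.proj j)).comp
        (PiLp.continuousLinearEquiv 2 ℂ (fun _ : Fin d => H)).toContinuousLinearMap)

lemma matOpNorm_eq_norm_matCLM {d : ℕ} (M : Matrix (Fin d) (Fin d) (H →L[ℂ] H)) :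
    matOpNorm M = ‖matCLM M‖ := rfl

lemma matCLM_apply {d : ℕ} (M : Matrix (Fin d) (Fin d) (H →L[ℂ] H))
    (x : PiLp 2 (fun _ : Fin d => H)) (i : Fin d) :
    matCLM M x i = ∑ j, M i j (x j) := by
  simp [matCLM]

lemma matCLM_mul {d : ℕ} (M N : Matrix (Fin d) (Fin d) (H →L[ℂ] H)) :
    matCLM (M * N) = (matCLM M).comp (matCLM N) := by
  ext x i
  simp only [matCLM_apply, Matrix.mul_apply, comp_apply, map_sum, sum_apply, mul_apply_eq_comp]
  exact Finset.sum_comm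

lemma matCLM_diagonal_apply {d : ℕ} (X : H →L[ℂ] H) (x : PiLp 2 (fun _ : Fin d => H))
    (i : Fin d) : matCLM (Matrix.diagonal fun _ => X) x i = X (x i) := by
  rw [matCLM_apply, Finset.sum_eq_single i
    (fun j _ hj => by simp [Matrix.diagonal_apply_ne _ hj.symm]) (by simp),
    Matrix.diagonal_apply_eq]

lemma norm_matCLM_diagonal_le {d : ℕ} (X : H →L[ℂ] H) :
    ‖matCLM (Matrix.diagonal fun _ : Fin d => X)‖ ≤ ‖X‖ := by
  refine opNorm_le_bound _ (norm_nonneg X) fun x => ?_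
  have hcomp (i : Fin d) : ‖matCLM (Matrix.diagonal fun _ => X) x i‖ ^ 2 ≤
      ‖X‖ ^ 2 * ‖x i‖ ^ 2 := by
    rw [matCLM_diagonal_apply, ← mul_pow]
    exact pow_le_pow_left₀ (norm_nonneg _) (X.le_opNorm (x i)) 2
  rw [PiLp.norm_eq_of_L2, PiLp.norm_eq_of_L2]
  calc √(∑ i, ‖matCLM (Matrix.diagonal fun _ => X) x i‖ ^ 2)
      ≤ √(∑ i, ‖X‖ ^ 2 * ‖x i‖ ^ 2) := Real.sqrt_le_sqrt (Finset.sum_le_sum fun i _ => hcomp i)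
    _ = ‖X‖ * √(∑ i, ‖x i‖ ^ 2) := by
      rw [← Finset.mul_sum, Real.sqrt_mul (sq_nonneg _), Real.sqrt_sq (norm_nonneg _)]

lemma matOpNorm_mul_mul_le {d : ℕ} (X Y : H →L[ℂ] H) (M : Matrix (Fin d) (Fin d) (H →L[ℂ] H)) :
    matOpNorm (fun i j => X * M i j * Y) ≤ ‖X‖ * matOpNorm M * ‖Y‖ := by
  have hfactor : Matrix.of (fun i j => X * M i j * Y) =
      Matrix.diagonal (fun _ => X) * M * Matrix.diagonal (fun _ => Y) := by
    ext i j
    rw [Matrix.mul_diagonal, Matrix.diagonal_mul, Matrix.of_apply]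
  calc matOpNorm (fun i j => X * M i j * Y)
      = ‖(matCLM (Matrix.diagonal fun _ => X)).comp
          ((matCLM M).comp (matCLM (Matrix.diagonal fun _ => Y)))‖ := by
        rw [← matCLM_mul, ← matCLM_mul, ← Matrix.mul_assoc, ← hfactor]
        rfl
    _ ≤ ‖matCLM (Matrix.diagonal fun _ => X)‖ *
        (‖matCLM M‖ * ‖matCLM (Matrix.diagonal fun _ => Y)‖) :=
        (opNorm_comp_le _ _).trans (by gcongr; exact opNorm_comp_le _ _)
    _ ≤ ‖X‖ * (‖matCLM M‖ * ‖Y‖) := by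
      gcongr
      · exact norm_matCLM_diagonal_le X
      · exact norm_matCLM_diagonal_le Y
    _ = ‖X‖ * matOpNorm M * ‖Y‖ := by rw [matOpNorm_eq_norm_matCLM, mul_assoc]

omit [NormedSpace ℂ H] in
lemma norm_piLp_fin_one (x : PiLp 2 (fun _ : Fin 1 => H)) : ‖x‖ = ‖x 0‖ := by
  simp [PiLp.norm_eq_of_L2]

lemma matOpNorm_fin_one (M : Matrix (Fin 1) (Fin 1) (H →L[ℂ] H)) : matOpNorm M = ‖M 0 0‖ := by
  have happly (x : PiLp 2 (fun _ : Fin 1 => H)) : ‖matCLM M x‖ = ‖M 0 0 (x 0)‖ := by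
    rw [norm_piLp_fin_one, matCLM_apply, Fin.sum_univ_one]
  refine le_antisymm ((matCLM M).opNorm_le_bound (norm_nonneg _) fun x => ?_)
    ((M 0 0).opNorm_le_bound (norm_nonneg _) fun v => ?_)
  · rw [happly, norm_piLp_fin_one]
    exact (M 0 0).le_opNorm (x 0)
  · calc ‖M 0 0 v‖ = ‖matCLM M (WithLp.toLp 2 fun _ => v)‖ :=
          (happly (WithLp.toLp 2 fun _ => v)).symm
      _ ≤ ‖matCLM M‖ * ‖WithLp.toLp 2 fun _ : Fin 1 => v‖ := le_opNorm _ _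
      _ = matOpNorm M * ‖v‖ := by rw [norm_piLp_fin_one]; rfl

lemma matOpNorm_fin_zero (M : Matrix (Fin 0) (Fin 0) (H →L[ℂ] H)) : matOpNorm M = 0 := by
  have hzero : matCLM M = 0 := by
    ext x i
    exact i.elim0
  rw [matOpNorm_eq_norm_matCLM, hzero, norm_zero]

end MatrixOperators

section RankOne

variable {H : Type*} [NormedAddCommGroup H] [InnerProductSpace ℂ H] [CompleteSpace H]

lemma mul_rankOne_mul (X Y : H →L[ℂ] H) (z y : H) :
    X * rankOne ℂ z y * Y = rankOne ℂ (X z) (adjoint Y y) := by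
  rw [mul_def, mul_def, comp_rankOne, rankOne_comp]

lemma norm_mul_norm_le_of_forall_rankOne {X Y : H →L[ℂ] H} {C : ℝ}
    (hC : ∀ z y : H, ‖z‖ ≤ 1 → ‖y‖ ≤ 1 → ‖X * rankOne ℂ z y * Y‖ ≤ C) :
    ‖X‖ * ‖Y‖ ≤ C := by
  have hC0 : 0 ≤ C := by simpa using hC 0 0
  have hvec (y : H) (hy : ‖y‖ = 1) : ‖X‖ * ‖adjoint Y y‖ ≤ C := by
    have := opNorm_le_of_unit_norm (f := (‖adjoint Y y‖ : ℂ) • X) hC0 fun z hz => by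
      simpa [mul_rankOne_mul, norm_smul, mul_comm] using hC z y hz.le hy.le
    simpa [norm_smul, mul_comm] using this
  have := opNorm_le_of_unit_norm (f := (‖X‖ : ℂ) • adjoint Y) hC0 fun y hy => by
    simpa [norm_smul] using hvec y hy
  simpa [norm_smul] using this

end RankOne

section CompletelyBoundedNorm

variable {ι H₂ H₃ : Type*} [NormedAddCommGroup H₂] [NormedSpace ℂ H₂]
  [NormedAddCommGroup H₃] [NormedSpace ℂ H₃] {dom : ι → (H₂ →L[ℂ] H₂)} {cod : ι → (H₃ →L[ℂ] H₃)}

lemma cbNormRel_le {C : ℝ} (h : ∀ (d : ℕ) (M : Matrix (Fin d) (Fin d) ι),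
      matOpNorm (fun i j => dom (M i j)) ≤ 1 → matOpNorm (fun i j => cod (M i j)) ≤ C) :
    cbNormRel dom cod ≤ C := by
  refine csSup_le ⟨0, 0, fun i => i.elim0, ?_, (matOpNorm_fin_zero _).symm⟩ ?_
  · exact (matOpNorm_fin_zero _).trans_le zero_le_one
  · rintro r ⟨d, M, hM, rfl⟩
    exact h d M hM

lemma norm_le_cbNormRel {C : ℝ} (h : ∀ (d : ℕ) (M : Matrix (Fin d) (Fin d) ι),
      matOpNorm (fun i j => dom (M i j)) ≤ 1 → matOpNorm (fun i j => cod (M i j)) ≤ C)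
    (i : ι) (hi : ‖dom i‖ ≤ 1) : ‖cod i‖ ≤ cbNormRel dom cod := by
  refine le_csSup ⟨C, ?_⟩ ⟨1, fun _ _ => i, (matOpNorm_fin_one (fun _ _ => dom i)).trans_le hi,
    (matOpNorm_fin_one (fun _ _ => cod i)).symm⟩
  rintro r ⟨d, M, hM, rfl⟩
  exact h d M hM

end CompletelyBoundedNorm

theorem cbNormRel_mul_mul_eq {H : Type*} [NormedAddCommGroup H] [InnerProductSpace ℂ H]
    [CompleteSpace H] {A : Set (H →L[ℂ] H)} (hrank : ∀ z y : H, rankOne ℂ z y ∈ A)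
    (X Y : H →L[ℂ] H) :
    cbNormRel (fun a : A => (a : H →L[ℂ] H)) (fun a : A => X * (a : H →L[ℂ] H) * Y) =
      ‖X‖ * ‖Y‖ := by
  have hconj (d : ℕ) (M : Matrix (Fin d) (Fin d) A)
      (hM : matOpNorm (fun i j => (M i j : H →L[ℂ] H)) ≤ 1) :
      matOpNorm (fun i j => X * (M i j : H →L[ℂ] H) * Y) ≤ ‖X‖ * ‖Y‖ :=
    calc _ ≤ ‖X‖ * matOpNorm (fun i j => (M i j : H →L[ℂ] H)) * ‖Y‖ :=
          matOpNorm_mul_mul_le _ _ _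
      _ ≤ ‖X‖ * 1 * ‖Y‖ := by gcongr
      _ = ‖X‖ * ‖Y‖ := by rw [mul_one]
  refine le_antisymm (cbNormRel_le hconj) (norm_mul_norm_le_of_forall_rankOne fun z y hz hy => ?_)
  have hnorm : ‖rankOne ℂ z y‖ ≤ 1 := by
    rw [norm_rankOne]
    exact mul_le_one₀ hz (norm_nonneg y) hy
  -- naming `cod` keeps unification from unfolding `rankOne`
  exact norm_le_cbNormRel (cod := fun a : A => X * (a : H →L[ℂ] H) * Y) hconj
    ⟨rankOne ℂ z y, hrank z y⟩ hnorm

/-- **Section 5, final remark**: if a unital operator algebra `A ⊆ B(H)` contains every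
operator of rank at most one, then for every invertible `X ∈ B(H)` the cb norm of
`a ↦ X a X⁻¹` on `A` equals `‖X‖ ‖X⁻¹‖`; in particular `A` has the conjugation with lower
bound property with constant `δ = 1`. -/
theorem stmt17
    {H : Type*} [NormedAddCommGroup H] [InnerProductSpace ℂ H] [CompleteSpace H]
    (A : Subalgebra ℂ (H →L[ℂ] H))
    (hrank : ∀ y z : H, ((innerSL ℂ y).smulRight z) ∈ A) :
    ∀ X : (H →L[ℂ] H)ˣ,
      cbNormRel (fun a : A => (a : H →L[ℂ] H))
          (fun a : A => (X : H →L[ℂ] H) * (a : H →L[ℂ] H) * (↑X⁻¹ : H →L[ℂ] H)) =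
        ‖(X : H →L[ℂ] H)‖ * ‖(↑X⁻¹ : H →L[ℂ] H)‖ :=
  fun X => cbNormRel_mul_mul_eq (A := A) (fun z y => hrank y z) X ↑X⁻¹
end
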